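/- arXiv:2509.12542 — 5 statements merged into one kernel-verified Lean document; each statement's English description precedes it below -/
import Mathlib

section
/- Let 𝔤 be a complex semisimple Lie algebra with simple roots Δ⁰ and parabolic subalgebra 𝔭 determined by a subset I ⊆ Δ⁰. Then W^𝔭(2) = {(ij) : α_i ∈ I, α_j ∈ N(i) ∪ I}, where N(i) ⊆ Δ⁰ is the set of simple roots connected to α_i by an edge in the Dynkin diagram and (ij) denotes the composition s_i ∘ s_j of simple root reflections. -/
/-!
We model the root system of a complex semisimple Lie algebra `𝔤` inside the
real span `h` of the roots in `𝔥*` (a Euclidean space, the inner product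
being induced by the Killing form).  The Weyl group is realised as a group of
linear automorphisms of `h`, generated by the simple reflections.
-/

open scoped RealInnerProductSpace

/-- The root datum of a complex semisimple Lie algebra: a finite, reduced,
crystallographic root system in a Euclidean space, together with a choice of
simple system `Δ⁰ = {α_1, …, α_l}` (a basis of `h`). -/
structure ComplexRootDatum (h : Type) [NormedAddCommGroup h]
    [InnerProductSpace ℝ h] [FiniteDimensional ℝ h] (l : ℕ) : Type where
  /-- the roots `Δ` -/
  roots : Finset h
  /-- the simple roots `α_1, …, α_l` (a basis of `h`) -/
  sb : Module.Basis (Fin l) ℝ h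
  root_ne_zero : ∀ α ∈ roots, α ≠ 0
  neg_mem : ∀ α ∈ roots, -α ∈ roots
  simple_mem : ∀ i, sb i ∈ roots
  coeff_sign : ∀ α ∈ roots, (∀ i, 0 ≤ sb.repr α i) ∨ (∀ i, sb.repr α i ≤ 0)
  coeff_int : ∀ α ∈ roots, ∀ i, ∃ n : ℤ, (sb.repr α i : ℝ) = n
  reflect_mem : ∀ α ∈ roots, ∀ β ∈ roots, β - (2 * ⟪β, α⟫ / ⟪α, α⟫) • α ∈ roots
  crystal : ∀ α ∈ roots, ∀ β ∈ roots, ∃ n : ℤ, 2 * ⟪β, α⟫ / ⟪α, α⟫ = n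

namespace ComplexRootDatum

variable {h : Type} [NormedAddCommGroup h] [InnerProductSpace ℝ h]
  [FiniteDimensional ℝ h] {l : ℕ}

/-- the linear functional `⟪α, ·⟫` -/
noncomputable def innerF (α : h) : Module.Dual ℝ h where
  toFun x := ⟪α, x⟫
  map_add' x y := inner_add_right α x y
  map_smul' c x := by simpa using real_inner_smul_right α x c

/-- the orthogonal reflection in the hyperplane `α^⊥` -/
noncomputable def reflectionOf (α : h) (hα : α ≠ 0) : h ≃ₗ[ℝ] h :=
  Module.reflection (f := (2 / ⟪α, α⟫) • innerF α) (x := α) (by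
    have h0 : ⟪α, α⟫ ≠ 0 := inner_self_ne_zero.mpr hα
    simp [innerF, LinearMap.smul_apply]
    field_simp)

variable (C : ComplexRootDatum h l)

/-- the simple reflection `s_i` -/
noncomputable def s (i : Fin l) : h ≃ₗ[ℝ] h :=
  reflectionOf (C.sb i) (C.root_ne_zero _ (C.simple_mem i))

/-- the length of a Weyl group element: the least number of simple
reflections needed to express it -/
noncomputable def len (w : h ≃ₗ[ℝ] h) : ℕ :=
  sInf {n | ∃ L : List (Fin l), L.length = n ∧ (L.map C.s).prod = w}

/-- the Weyl group `W`, generated by the simple reflections -/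
def W : Subgroup (h ≃ₗ[ℝ] h) := Subgroup.closure (Set.range C.s)

/-- `W_𝔭`: the subgroup generated by the simple reflections `s_i` with
`α_i ∈ Δ⁰ ∖ I` -/
def Wp (I : Finset (Fin l)) : Subgroup (h ≃ₗ[ℝ] h) :=
  Subgroup.closure {w | ∃ i ∉ I, w = C.s i}

/-- `W^𝔭`: the set of minimal-length representatives of the right cosets
`W_𝔭\W` -/
def Wpmin (I : Finset (Fin l)) : Set (h ≃ₗ[ℝ] h) :=
  {w | w ∈ C.W ∧ ∀ u ∈ C.Wp I, C.len w ≤ C.len (u * w)}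

/-- `W^𝔭(k)`: the elements of `W^𝔭` of length `k` -/
def WpOfLen (I : Finset (Fin l)) (k : ℕ) : Set (h ≃ₗ[ℝ] h) :=
  {w | w ∈ C.Wpmin I ∧ C.len w = k}

/-- `N(i)`: the set of simple roots connected to `α_i` by an edge in the
Dynkin diagram -/
def N (i : Fin l) : Set (Fin l) := {j | j ≠ i ∧ ⟪C.sb i, C.sb j⟫ ≠ 0}

end ComplexRootDatum

namespace ComplexRootDatum

variable {h : Type} [NormedAddCommGroup h] [InnerProductSpace ℝ h]
  [FiniteDimensional ℝ h] {l : ℕ} (C : ComplexRootDatum h l)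

-- AUX START
lemma inner_sb_self_ne_zero (k : Fin l) : ⟪C.sb k, C.sb k⟫ ≠ 0 :=
  inner_self_ne_zero.mpr (C.root_ne_zero _ (C.simple_mem k))

lemma s_apply (k : Fin l) (x : h) :
    C.s k x = x - (2 * ⟪C.sb k, x⟫ / ⟪C.sb k, C.sb k⟫) • C.sb k := by
  rw [s, reflectionOf, Module.reflection_apply]
  congr 2
  simp [innerF]
  ring

lemma repr_s (k : Fin l) (x : h) (m : Fin l) :
    C.sb.repr (C.s k x) m = C.sb.repr x m
      - (2 * ⟪C.sb k, x⟫ / ⟪C.sb k, C.sb k⟫) * (if k = m then 1 else 0) := by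
  rw [C.s_apply, map_sub, map_smul, Finsupp.sub_apply, Finsupp.smul_apply,
    C.sb.repr_self, Finsupp.single_apply, smul_eq_mul]

lemma s_mul_self (k : Fin l) : C.s k * C.s k = 1 := by
  apply LinearEquiv.ext
  intro x
  show C.s k (C.s k x) = x
  rw [s, reflectionOf]
  exact Module.involutive_reflection _ x

lemma s_inv (k : Fin l) : (C.s k)⁻¹ = C.s k :=
  inv_eq_of_mul_eq_one_right (C.s_mul_self k)

lemma s_mem_W (k : Fin l) : C.s k ∈ C.W :=
  Subgroup.subset_closure ⟨k, rfl⟩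

lemma wp_le_W (I : Finset (Fin l)) : C.Wp I ≤ C.W := by
  rw [Wp, W]
  apply (Subgroup.closure_le _).2
  rintro g ⟨i, -, rfl⟩
  exact Subgroup.subset_closure ⟨i, rfl⟩

lemma len_le {w : h ≃ₗ[ℝ] h} (L : List (Fin l)) (hL : (L.map C.s).prod = w) :
    C.len w ≤ L.length :=
  Nat.sInf_le ⟨L, rfl, hL⟩

lemma mem_W_list {w : h ≃ₗ[ℝ] h} (hw : w ∈ C.W) :
    ∃ L : List (Fin l), (L.map C.s).prod = w := by
  refine Subgroup.closure_induction ?_ ⟨[], rfl⟩ ?_ ?_ hw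
  · rintro g ⟨i, rfl⟩; exact ⟨[i], by simp⟩
  · rintro a b - - ⟨L1, h1⟩ ⟨L2, h2⟩
    exact ⟨L1 ++ L2, by rw [List.map_append, List.prod_append, h1, h2]⟩
  · rintro a - ⟨L, rfl⟩
    refine ⟨L.reverse, ?_⟩
    induction L with
    | nil => simp
    | cons c t ih =>
      rw [List.reverse_cons, List.map_append, List.prod_append, ih, List.map_cons,
        List.prod_cons, List.map_nil, List.prod_nil, mul_one, List.map_cons,
        List.prod_cons, mul_inv_rev, C.s_inv]

lemma exists_list_len {w : h ≃ₗ[ℝ] h} (hw : w ∈ C.W) :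
    ∃ L : List (Fin l), L.length = C.len w ∧ (L.map C.s).prod = w := by
  have hne : {n | ∃ L : List (Fin l), L.length = n ∧ (L.map C.s).prod = w}.Nonempty := by
    obtain ⟨L, hL⟩ := C.mem_W_list hw
    exact ⟨L.length, L, rfl, hL⟩
  exact Nat.sInf_mem hne

lemma wp_repr {I : Finset (Fin l)} {u : h ≃ₗ[ℝ] h} (hu : u ∈ C.Wp I)
    {m : Fin l} (hm : m ∈ I) : ∀ x, C.sb.repr (u x) m = C.sb.repr x m := by
  refine Subgroup.closure_induction ?_ (fun x => rfl) ?_ ?_ hu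
  · rintro g ⟨i, hiI, rfl⟩ x
    rw [C.repr_s]
    have hne : i ≠ m := fun hh => hiI (hh ▸ hm)
    simp [hne]
  · intro a b _ _ ha hb x
    have : (a * b) x = a (b x) := rfl
    rw [this, ha, hb]
  · intro a _ ha x
    have h2 := ha (a⁻¹ x)
    have : a (a⁻¹ x) = x := a.apply_symm_apply x
    rw [this] at h2
    exact h2.symm

lemma two_le_len {w : h ≃ₗ[ℝ] h} (hw : w ∈ C.W) (h1 : w ≠ 1)
    (h2 : ∀ k, w ≠ C.s k) : 2 ≤ C.len w := by
  obtain ⟨L, hlen, hprod⟩ := C.exists_list_len hw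
  rw [← hlen]
  rcases L with _ | ⟨a, _ | ⟨b, t⟩⟩
  · simp at hprod; exact absurd hprod.symm h1
  · simp at hprod; exact absurd hprod.symm (h2 a)
  · simp

lemma repr_s_ne {k m : Fin l} (hkm : k ≠ m) (x : h) :
    C.sb.repr (C.s k x) m = C.sb.repr x m := by
  rw [C.repr_s]; simp [hkm]

lemma s_apply_self (k : Fin l) : C.s k (C.sb k) = -C.sb k := by
  rw [C.s_apply, mul_div_assoc, div_self (C.inner_sb_self_ne_zero k), mul_one, two_smul]
  abel

lemma s_apply_orth {k : Fin l} {x : h} (hx : ⟪C.sb k, x⟫ = 0) : C.s k x = x := by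
  rw [C.s_apply, hx]; simp

lemma E1 {i j : Fin l} (hij : j ≠ i) :
    C.sb.repr (C.s j (C.s i (C.sb i))) i = -1 := by
  rw [C.s_apply_self, C.repr_s_ne hij]
  simp [Module.Basis.repr_self_apply]

lemma E2 {i j k : Fin l} (hij : j ≠ i) (hki : k ≠ i) :
    C.sb.repr (C.s k (C.s j (C.s i (C.sb i)))) i = -1 := by
  rw [C.repr_s_ne hki, C.E1 hij]

lemma E3 {i j : Fin l} (hij : j ≠ i) (ht : ⟪C.sb i, C.sb j⟫ ≠ 0) :
    C.sb.repr (C.s i (C.s j (C.s i (C.sb i)))) i ≠ 1 := by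
  have hi := C.inner_sb_self_ne_zero i
  have hj := C.inner_sb_self_ne_zero j
  rw [C.s_apply_self, C.s_apply j, C.s_apply i]
  simp only [inner_neg_right, inner_sub_right, inner_smul_right, map_sub, map_neg, map_smul,
    Finsupp.sub_apply, Finsupp.neg_apply, Finsupp.smul_apply, Module.Basis.repr_self,
    Finsupp.single_apply, smul_eq_mul, hij, if_true, if_false]
  intro heq
  apply ht
  have hc : ⟪C.sb j, C.sb i⟫ = ⟪C.sb i, C.sb j⟫ := real_inner_comm _ _
  rw [hc] at heq
  field_simp at heq
  have h2 : ⟪C.sb i, C.sb j⟫ * ⟪C.sb i, C.sb j⟫ = 0 := by linarith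
  exact mul_self_eq_zero.mp h2

lemma E4 {i j : Fin l} (ht : ⟪C.sb i, C.sb j⟫ = 0) :
    C.sb.repr (C.s i (C.s j (C.s i (C.sb j)))) j = -1 := by
  rw [C.s_apply_orth ht, C.s_apply_self,
    C.s_apply_orth (by rw [inner_neg_right, ht, neg_zero])]
  simp [Module.Basis.repr_self_apply]

lemma s_comm {i j : Fin l} (ht : ⟪C.sb i, C.sb j⟫ = 0) :
    C.s i * C.s j = C.s j * C.s i := by
  have ht' : ⟪C.sb j, C.sb i⟫ = 0 := by rw [real_inner_comm]; exact ht
  apply LinearEquiv.ext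
  intro x
  show C.s i (C.s j x) = C.s j (C.s i x)
  rw [C.s_apply j x, C.s_apply i, C.s_apply i x, C.s_apply j]
  simp only [inner_sub_right, inner_smul_right, ht, ht', mul_zero, sub_zero]
  abel

end ComplexRootDatum

/-- Proposition 2.3.  Let `𝔤` be a complex semisimple Lie
algebra with simple roots `Δ⁰` and parabolic subalgebra `𝔭` determined by a
subset `I ⊆ Δ⁰`.  Then `W^𝔭(2) = {(ij) : α_i ∈ I, α_j ∈ N(i) ∪ I}`, where
`(ij)` denotes the length-two composition `s_i ∘ s_j` of simple root
reflections (so in particular `j ≠ i`), and `N(i)` is the set of simple roots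
connected to `α_i` by an edge in the Dynkin diagram. -/
theorem stmt_4 {h : Type} [NormedAddCommGroup h] [InnerProductSpace ℝ h]
    [FiniteDimensional ℝ h] {l : ℕ} (C : ComplexRootDatum h l)
    (I : Finset (Fin l)) :
    C.WpOfLen I 2 =
      {w | ∃ i ∈ I, ∃ j, j ≠ i ∧ (j ∈ C.N i ∨ j ∈ I) ∧ w = C.s i * C.s j} := by
  ext w
  simp only [ComplexRootDatum.WpOfLen, ComplexRootDatum.Wpmin, Set.mem_setOf_eq]
  constructor
  · rintro ⟨⟨hW, hmin⟩, hlen⟩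
    obtain ⟨L, hLlen, hLprod⟩ := C.exists_list_len hW
    rw [hlen] at hLlen
    rcases L with _ | ⟨i, _ | ⟨j, _ | ⟨x, t⟩⟩⟩ <;> simp at hLlen
    have hw : w = C.s i * C.s j := by
      rw [← hLprod]; simp
    have hij : j ≠ i := by
      rintro rfl
      rw [C.s_mul_self] at hw
      have h0 : C.len w ≤ 0 := C.len_le [] (by simp [hw])
      omega
    have hiI : i ∈ I := by
      by_contra hiI
      have hu : C.s i ∈ C.Wp I := Subgroup.subset_closure ⟨i, hiI, rfl⟩
      have h1 : C.s i * w = C.s j := by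
        rw [hw, ← mul_assoc, C.s_mul_self, one_mul]
      have h2 : C.len (C.s i * w) ≤ 1 := C.len_le [j] (by simp [h1])
      have h3 := hmin _ hu
      omega
    refine ⟨i, hiI, j, hij, ?_, hw⟩
    by_cases ht : ⟪C.sb i, C.sb j⟫ = 0
    · right
      by_contra hjI
      have hu : C.s j ∈ C.Wp I := Subgroup.subset_closure ⟨j, hjI, rfl⟩
      have h1 : C.s j * w = C.s i := by
        rw [hw, C.s_comm ht, ← mul_assoc, C.s_mul_self, one_mul]
      have h2 : C.len (C.s j * w) ≤ 1 := C.len_le [i] (by simp [h1])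
      have h3 := hmin _ hu
      omega
    · exact Or.inl ⟨hij, ht⟩
  · rintro ⟨i, hiI, j, hij, hcond, rfl⟩
    set w := C.s i * C.s j with hw
    have hW : w ∈ C.W := mul_mem (C.s_mem_W i) (C.s_mem_W j)
    have hE5 : C.sb.repr (w (C.sb j)) j = -1 := C.E1 hij.symm
    have hne1 : w ≠ 1 := by
      intro hw1
      rw [hw1] at hE5
      simp [Module.Basis.repr_self_apply] at hE5
      exact absurd hE5 (by norm_num)
    have hnes : ∀ k, w ≠ C.s k := by
      intro k hk
      by_cases hkj : k = j
      · subst hkj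
        have hs1 : C.s i = 1 := by
          have : C.s i * C.s k = 1 * C.s k := by rw [← hw, hk, one_mul]
          exact mul_right_cancel this
        have := C.s_apply_self i
        rw [hs1] at this
        have h2 : C.sb.repr (C.sb i) i = C.sb.repr (-(C.sb i)) i := by
          conv_lhs => rw [show C.sb i = (1 : h ≃ₗ[ℝ] h) (C.sb i) from rfl, this]
        simp [Module.Basis.repr_self_apply] at h2
        exact absurd h2 (by norm_num)
      · rw [hk] at hE5
        rw [C.repr_s_ne (fun hh => hkj hh) (C.sb j)] at hE5
        simp [Module.Basis.repr_self_apply] at hE5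
        exact absurd hE5 (by norm_num)
    have hlen2 : C.len w = 2 :=
      le_antisymm (C.len_le [i, j] (by simp [hw])) (C.two_le_len hW hne1 hnes)
    refine ⟨⟨hW, ?_⟩, hlen2⟩
    intro u hu
    rw [hlen2]
    have hinv : w⁻¹ = C.s j * C.s i := by
      rw [hw, mul_inv_rev, C.s_inv, C.s_inv]
    refine C.two_le_len (mul_mem (C.wp_le_W I hu) hW) ?_ ?_
    · intro h1
      have huw : u = w⁻¹ := eq_inv_of_mul_eq_one_left h1
      rw [huw] at hu
      have hval := C.wp_repr hu hiI (C.sb i)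
      rw [hinv] at hval
      have : (C.s j * C.s i) (C.sb i) = C.s j (C.s i (C.sb i)) := rfl
      rw [this, C.E1 hij] at hval
      simp [Module.Basis.repr_self_apply] at hval
      exact absurd hval (by norm_num)
    · intro k hk
      have huw : u = C.s k * w⁻¹ := by
        rw [← hk, mul_assoc, mul_inv_cancel, mul_one]
      rw [huw, hinv] at hu
      have happ : (C.s k * (C.s j * C.s i)) (C.sb i) = C.s k (C.s j (C.s i (C.sb i))) := rfl
      by_cases hki : k = i
      · rw [hki] at hu
        by_cases ht : ⟪C.sb i, C.sb j⟫ = 0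
        · have hjI : j ∈ I := hcond.resolve_left (fun hN => hN.2 ht)
          have hval := C.wp_repr hu hjI (C.sb j)
          have happ2 : (C.s i * (C.s j * C.s i)) (C.sb j) = C.s i (C.s j (C.s i (C.sb j))) := rfl
          rw [happ2, C.E4 ht] at hval
          simp [Module.Basis.repr_self_apply] at hval
          exact absurd hval (by norm_num)
        · have hval := C.wp_repr hu hiI (C.sb i)
          have happ2 : (C.s i * (C.s j * C.s i)) (C.sb i) = C.s i (C.s j (C.s i (C.sb i))) := rfl
          rw [happ2] at hval
          simp [Module.Basis.repr_self_apply] at hval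
          exact C.E3 hij ht hval
      · have hval := C.wp_repr hu hiI (C.sb i)
        rw [happ, C.E2 hij hki] at hval
        simp [Module.Basis.repr_self_apply] at hval
        exact absurd hval (by norm_num)
end

section
/- Let 𝔤 be a real semisimple Lie algebra with parabolic subalgebra 𝔭 determined by Î ⊆ Δ̂⁰. Suppose τ ∈ 𝔞* satisfies τ^♯ ∉ 𝔷(𝔤₀), and there exist restricted roots ν₀, α ∈ Δ̂⁺(𝔭⁺) such that 𝔤₀^ss ∩ 𝔞 ⊆ ker ν₀ and ⟨ν₀, α⟩ = 0. Then there exists R ∈ 𝔤₀^ss ∩ 𝔞 such that a₀ := α^♯ + R ∈ ker τ ∩ ker ν₀. -/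
/-!
We model the structure theory of a real semisimple Lie algebra `𝔤` with a
maximally noncompact `θ`-stable Cartan subalgebra as follows.  The noncompact
part `𝔞` of the Cartan subalgebra is modelled by a finite-dimensional real
inner product space `a`, the inner product being the restriction of the
Killing form (which is positive definite on `𝔞`).  Via the musical
isomorphism `♯ : 𝔞* → 𝔞` determined by the Killing form, restricted roots
(and more general functionals `τ ∈ 𝔞*`) are recorded as *elements* of `a`;
evaluation `α(H)` becomes the inner product `⟪α, H⟫`.
-/

open scoped RealInnerProductSpace

/-- The restricted root datum of a real semisimple Lie algebra `𝔤`: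
restricted roots `Δ̂ ⊂ 𝔞* ≅ 𝔞` with a choice of simple restricted roots
`Δ̂⁰ = {β_1, …, β_r}` (which form a basis of `𝔞`, `r` being the real rank). -/
structure RestrictedRootDatum (a : Type) [NormedAddCommGroup a]
    [InnerProductSpace ℝ a] [FiniteDimensional ℝ a] (r : ℕ) : Type where
  /-- the set of restricted roots `Δ̂` -/
  roots : Finset a
  /-- the simple restricted roots `β_1, …, β_r`, a basis of `𝔞` -/
  b : Module.Basis (Fin r) ℝ a
  root_ne_zero : ∀ α ∈ roots, α ≠ 0
  neg_mem : ∀ α ∈ roots, -α ∈ roots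
  simple_mem : ∀ i, b i ∈ roots
  /-- each restricted root has coefficients of a single sign w.r.t. `Δ̂⁰` -/
  coeff_sign : ∀ α ∈ roots, (∀ i, 0 ≤ b.repr α i) ∨ (∀ i, b.repr α i ≤ 0)
  /-- the coefficients are integers -/
  coeff_int : ∀ α ∈ roots, ∀ i, ∃ n : ℤ, (b.repr α i : ℝ) = n

namespace RestrictedRootDatum

variable {a : Type} [NormedAddCommGroup a] [InnerProductSpace ℝ a]
  [FiniteDimensional ℝ a] {r : ℕ} (R : RestrictedRootDatum a r)

/-- the positive restricted roots `Δ̂⁺` determined by `Δ̂⁰` -/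
def posSet : Set a := {α | α ∈ R.roots ∧ ∀ i, 0 ≤ R.b.repr α i}

end RestrictedRootDatum

/-- A parabolic subalgebra `𝔭 ≤ 𝔤`, determined by a subset
`Î ⊆ Δ̂⁰` of crossed simple restricted roots. -/
structure ParabolicDatum (a : Type) [NormedAddCommGroup a]
    [InnerProductSpace ℝ a] [FiniteDimensional ℝ a] (r : ℕ)
    extends RestrictedRootDatum a r where
  /-- the crossed simple restricted roots `Î ⊆ Δ̂⁰` determining `𝔭` -/
  Ihat : Finset (Fin r)

namespace ParabolicDatum

variable {a : Type} [NormedAddCommGroup a] [InnerProductSpace ℝ a]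
  [FiniteDimensional ℝ a] {r : ℕ} (P : ParabolicDatum a r)

/-- the `Î`-height `h_Î(α)` of an element of `𝔞 ≅ 𝔞*` -/
noncomputable def height (α : a) : ℝ := ∑ i ∈ P.Ihat, P.b.repr α i

/-- `Δ̂⁺(𝔭⁺)`: the restricted roots of positive `Î`-height -/
def posP : Set a := {α | α ∈ P.roots ∧ 0 < P.height α}

/-- `Δ̂(𝔤₀)`: the restricted roots of zero `Î`-height -/
def g0roots : Set a := {α | α ∈ P.roots ∧ P.height α = 0}

/-- `𝔤₀^ss ∩ 𝔞`: the subspace of `𝔞` spanned by the (duals `β_k^♯` of the)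
uncrossed simple restricted roots `β_k ∈ Δ̂⁰ ∖ Î`. -/
def g0ssA : Submodule ℝ a := Submodule.span ℝ {x | ∃ i ∉ P.Ihat, x = P.b i}

/-- `𝔷(𝔤₀) ∩ 𝔞`, the Killing-orthogonal complement of `𝔤₀^ss ∩ 𝔞` in `𝔞`. -/
noncomputable def zg0A : Submodule ℝ a := (P.g0ssA)ᗮ

/-- `H ∈ 𝔞` is a scaling element if the restricted roots vanishing on `H`
are exactly those of height `0`, i.e. `Δ̂(𝔤₀) = {α ∈ Δ̂ : α(H) = 0}`. -/
def IsScaling (H : a) : Prop := ∀ α ∈ P.roots, (⟪α, H⟫ = 0 ↔ P.height α = 0)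

end ParabolicDatum

/-- Lemma `twoOrthogonal`.  Let `𝔤` be a real semisimple Lie
algebra with parabolic subalgebra `𝔭` determined by `Î ⊆ Δ̂⁰`.  Suppose
`τ ∈ 𝔞*` satisfies `τ^♯ ∉ 𝔷(𝔤₀)`, and there exist restricted roots
`ν₀, α ∈ Δ̂⁺(𝔭⁺)` such that `𝔤₀^ss ∩ 𝔞 ⊆ ker ν₀` and `⟪ν₀, α⟫ = 0`.  Then
there exists `R ∈ 𝔤₀^ss ∩ 𝔞` such that `a₀ := α^♯ + R ∈ ker τ ∩ ker ν₀`.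

Here `τ`, `ν₀`, `α` are recorded as the elements `τ^♯, ν₀^♯, α^♯` of `𝔞`, so
that e.g. `x ∈ ker τ` reads `⟪τ, x⟫ = 0`. -/
theorem stmt_5 {a : Type} [NormedAddCommGroup a] [InnerProductSpace ℝ a]
    [FiniteDimensional ℝ a] {r : ℕ} (P : ParabolicDatum a r)
    (τ : a) (hτ : τ ∉ P.zg0A)
    (ν₀ α : a) (hν₀ : ν₀ ∈ P.posP) (hα : α ∈ P.posP)
    (hker : ∀ x ∈ P.g0ssA, ⟪ν₀, x⟫ = 0)
    (horth : ⟪ν₀, α⟫ = 0) :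
    ∃ R ∈ P.g0ssA, ⟪τ, α + R⟫ = 0 ∧ ⟪ν₀, α + R⟫ = 0 := by

  obtain ⟨x, hx, hxne⟩ : ∃ x ∈ P.g0ssA, ⟪τ, x⟫ ≠ 0 := by
    by_contra h
    push_neg at h
    exact hτ (Submodule.mem_orthogonal' _ _ |>.mpr h)
  refine ⟨(-(⟪τ, α⟫ / ⟪τ, x⟫)) • x, Submodule.smul_mem _ _ hx, ?_, ?_⟩
  · rw [inner_add_right, real_inner_smul_right]
    field_simp
    ring
  · rw [inner_add_right, real_inner_smul_right, horth, hker x hx]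
    ring
end

section
/- Let 𝔤 be a real semisimple Lie algebra with parabolic subalgebra 𝔭 inducing the grading 𝔤 = 𝔤_- ⊕ 𝔤₀ ⊕ 𝔤₊, and let V ≤ Λ²(𝔤_-)* ⊗ 𝔤 be a 𝔤₀-irreducible subrepresentation. Suppose there is a 𝔤₀ lowest weight vector v ∈ V contained in V_{β,γ,ζ}. Then every 𝔤₀ lowest weight vector in V is contained in V_{β,γ,ζ}. -/
/-!
We model the structure theory of a real semisimple Lie algebra `𝔤` with a
maximally noncompact `θ`-stable Cartan subalgebra as follows.  The noncompact
part `𝔞` of the Cartan subalgebra is modelled by a finite-dimensional real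
inner product space `a`, the inner product being the restriction of the
Killing form (which is positive definite on `𝔞`).  Via the musical
isomorphism `♯ : 𝔞* → 𝔞` determined by the Killing form, restricted roots
(and more general functionals `τ ∈ 𝔞*`) are recorded as *elements* of `a`;
evaluation `α(H)` becomes the inner product `⟪α, H⟫`.
-/

open scoped RealInnerProductSpace

namespace ParabolicDatum

variable {a : Type} [NormedAddCommGroup a] [InnerProductSpace ℝ a]
  [FiniteDimensional ℝ a] {r : ℕ} (P : ParabolicDatum a r)

/-- the negative restricted roots `−Δ̂⁺` -/
def negRoots : Set a := {α | α ∈ P.roots ∧ ∀ i, P.b.repr α i ≤ 0}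

/-- the negative restricted roots of the Levi subalgebra `𝔤₀` -/
def g0negRoots : Set a :=
  {α | α ∈ P.roots ∧ P.height α = 0 ∧ ∀ i, P.b.repr α i ≤ 0}

end ParabolicDatum


/-- `𝔤` is a *complex* Lie algebra if its adjoint representation admits a
compatible complex structure; otherwise it is *noncomplex*. -/
def IsComplexLie (g : Type) [LieRing g] [LieAlgebra ℝ g] : Prop :=
  ∃ J : g →ₗ[ℝ] g, J ∘ₗ J = -LinearMap.id ∧ ∀ x y : g, ⁅x, J y⁆ = J ⁅x, y⁆

section LieSetup

variable {g : Type} [LieRing g] [LieAlgebra ℝ g]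
  {a : Type} [NormedAddCommGroup a] [InnerProductSpace ℝ a]
  [FiniteDimensional ℝ a] {r : ℕ}

/-- The restricted root space `𝔤_α ≤ 𝔤` of `α ∈ 𝔞* ≅ 𝔞`:
`𝔤_α = {X ∈ 𝔤 : [H, X] = α(H) X for all H ∈ 𝔞}`. -/
noncomputable def rootSpace (emb : a →ₗ[ℝ] g) (α : a) : Submodule ℝ g :=
  ⨅ H : a, Module.End.eigenspace (LieAlgebra.ad ℝ g (emb H)) ⟪α, H⟫

/-- `𝔤₋ = 𝔤_{-k} ⊕ ⋯ ⊕ 𝔤_{-1}`: the sum of the restricted root spaces of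
negative `Î`-height. -/
noncomputable def gminusOf (P : ParabolicDatum a r) (emb : a →ₗ[ℝ] g) :
    Submodule ℝ g :=
  ⨆ α ∈ {β | β ∈ P.roots ∧ P.height β < 0}, rootSpace emb α

/-- the parabolic subalgebra `𝔭 = 𝔤₀ ⊕ 𝔭₊` as a subspace of `𝔤` -/
noncomputable def paraOf (P : ParabolicDatum a r) (emb : a →ₗ[ℝ] g) :
    Submodule ℝ g :=
  rootSpace emb (0 : a) ⊔ ⨆ α ∈ {β | β ∈ P.roots ∧ 0 ≤ P.height β}, rootSpace emb α

/-- the Levi subalgebra `𝔤₀ = Z(𝔞) ⊕ ⨁_{α ∈ Δ̂(𝔤₀)} 𝔤_α` as a subspace -/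
noncomputable def g0Of (P : ParabolicDatum a r) (emb : a →ₗ[ℝ] g) :
    Submodule ℝ g :=
  rootSpace emb (0 : a) ⊔ ⨆ α ∈ {β | β ∈ P.roots ∧ P.height β = 0}, rootSpace emb α

/-- A realisation of the restricted-root structure theory inside an actual
real Lie algebra `𝔤`: an embedding of `𝔞`, the restricted root space
decomposition, and the projection of `𝔤` onto `𝔤₋` along `𝔭`. -/
structure LieSetup (g : Type) [LieRing g] [LieAlgebra ℝ g]
    {a : Type} [NormedAddCommGroup a] [InnerProductSpace ℝ a]
    [FiniteDimensional ℝ a] {r : ℕ} (P : ParabolicDatum a r) : Type where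
  /-- the inclusion `𝔞 ↪ 𝔤` -/
  emb : a →ₗ[ℝ] g
  emb_inj : Function.Injective emb
  emb_abelian : ∀ x y : a, ⁅emb x, emb y⁆ = (0 : g)
  /-- the restricted root space decomposition
  `𝔤 = Z(𝔞) ⊕ ⨁_{α ∈ Δ̂} 𝔤_α` -/
  decomp : rootSpace emb (0 : a) ⊔ (⨆ α ∈ (P.roots : Set a), rootSpace emb α) = ⊤
  root_space_ne_bot : ∀ α ∈ P.roots, rootSpace emb α ≠ ⊥
  /-- the projection `𝔤 → 𝔤₋` along `𝔭` -/
  proj : g →ₗ[ℝ] g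
  proj_mem : ∀ x, proj x ∈ gminusOf P emb
  proj_id : ∀ x ∈ gminusOf P emb, proj x = x
  proj_para : ∀ x ∈ paraOf P emb, proj x = 0

namespace LieSetup

variable {P : ParabolicDatum a r} (S : LieSetup g P)

/-- `𝔤₋` -/
noncomputable abbrev gminus : Submodule ℝ g := gminusOf P S.emb

/-- `𝔤₀` -/
noncomputable abbrev g0 : Submodule ℝ g := g0Of P S.emb

/-- `𝔭` -/
noncomputable abbrev para : Submodule ℝ g := paraOf P S.emb

/-- the space of 2-cochains `C²(𝔤₋, 𝔤) = Λ²(𝔤₋)* ⊗ 𝔤`, realised as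
alternating bilinear maps `𝔤₋ × 𝔤₋ → 𝔤` -/
noncomputable abbrev C2 := AlternatingMap ℝ (↥S.gminus) g (Fin 2)

/-- the projection `𝔤 → 𝔤₋`, with values in the subtype -/
noncomputable def pm (x : g) : ↥S.gminus := ⟨S.proj x, S.proj_mem x⟩

/-- the natural `𝔤₀`-action of `x ∈ 𝔤₀` on a cochain `Ω`, evaluated at
`(u, v)`:  `(x·Ω)(u,v) = [x, Ω(u,v)] − Ω(π[x,u], v) − Ω(u, π[x,v])` -/
noncomputable def actF (x : g) (Ω : S.C2) (u v : ↥S.gminus) : g :=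
  ⁅x, Ω ![u, v]⁆ - Ω ![S.pm ⁅x, (u : g)⁆, v] - Ω ![u, S.pm ⁅x, (v : g)⁆]

/-- `Ω` is a restricted weight vector of weight `τ ∈ 𝔞* ≅ 𝔞` for the
`𝔤₀`-action: `𝔞` acts on `Ω` by the functional `τ`. -/
noncomputable def IsWeightVector (Ω : S.C2) (τ : a) : Prop :=
  Ω ≠ 0 ∧ ∀ (H : a) (u v : ↥S.gminus),
    S.actF (S.emb H) Ω u v = ⟪τ, H⟫ • Ω ![u, v]

/-- `Ω` is a `𝔤₀` lowest weight vector of weight `τ`: a restricted weight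
vector annihilated by all negative restricted root spaces of `𝔤₀`. -/
noncomputable def IsLowestWeightVector (Ω : S.C2) (τ : a) : Prop :=
  S.IsWeightVector Ω τ ∧
    ∀ α ∈ P.g0negRoots, ∀ x ∈ rootSpace S.emb α,
      ∀ u v : ↥S.gminus, S.actF x Ω u v = 0

/-- Membership in the subspace
`V_{β,γ,ζ} = (𝔤_β)_♭ ∧ (𝔤_γ)_♭ ⊗ 𝔤_ζ ≤ Λ²(𝔤₋)* ⊗ 𝔤`
(using the Killing identification `(𝔤₋)* ≅ 𝔭₊`, so that `(𝔤_β)_♭` pairs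
nontrivially only with `𝔤_{−β}`): a cochain lies in `V_{β,γ,ζ}` iff it takes
values in `𝔤_ζ` and vanishes on all pairs of restricted root vectors except
those in `𝔤_{−β} × 𝔤_{−γ}` (in either order). -/
noncomputable def MemV (Ω : S.C2) (β γ ζ : a) : Prop :=
  (∀ u v : ↥S.gminus, Ω ![u, v] ∈ rootSpace S.emb ζ) ∧
  (∀ δ ∈ P.roots, ∀ ε ∈ P.roots,
    ¬((δ = -β ∧ ε = -γ) ∨ (δ = -γ ∧ ε = -β)) →
    ∀ u v : ↥S.gminus, (u : g) ∈ rootSpace S.emb δ →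
      (v : g) ∈ rootSpace S.emb ε → Ω ![u, v] = 0)

/-- `𝔟₋`: the nilpotent subalgebra of `𝔤` generated by the negative
restricted root spaces -/
noncomputable def bminus : LieSubalgebra ℝ g :=
  LieSubalgebra.lieSpan ℝ g (⋃ α ∈ P.negRoots, (rootSpace S.emb α : Set g))

/-- The **Kruglikov–The property** for a cochain `Ω`:
(1) `im(Ω) ⊆ 𝔤₋ ⊕ 𝔨_Ω`, where `𝔨_Ω ≤ 𝔤₀` is the (infinitesimal) stabiliser
    of `Ω` in the Levi subalgebra; and
(2) `im(Ω ∧ 1) ⊆ ker Ω`, i.e. inserting the `𝔤₋`-component of any value of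
    `Ω` back into `Ω` gives zero. -/
noncomputable def KruglikovThe (Ω : S.C2) : Prop :=
  (∀ u v : ↥S.gminus, ∃ y ∈ S.gminus, ∃ z,
      (z ∈ S.g0 ∧ ∀ u' v' : ↥S.gminus, S.actF z Ω u' v' = 0) ∧
      Ω ![u, v] = y + z) ∧
  (∀ u v w : ↥S.gminus, Ω ![S.pm (Ω ![u, v]), w] = 0)

end LieSetup

/-- The `𝔤₀`-action on 2-cochains, packaged as a linear action.  It is
uniquely determined by `act_apply`. -/
structure ActionData {g : Type} [LieRing g] [LieAlgebra ℝ g]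
    {a : Type} [NormedAddCommGroup a] [InnerProductSpace ℝ a]
    [FiniteDimensional ℝ a] {r : ℕ} {P : ParabolicDatum a r}
    (S : LieSetup g P) : Type where
  act : g →ₗ[ℝ] S.C2 →ₗ[ℝ] S.C2
  act_apply : ∀ (x : g) (Ω : S.C2) (u v : ↥S.gminus),
    act x Ω ![u, v] = S.actF x Ω u v

/-- The harmonic 2-cochains: `harmonic = ker Δ ≅ H²(𝔤₋, 𝔤)` for the
algebraic Laplacian `Δ = ∂∂* + ∂*∂`, and `harmonicPos ≅ H²(𝔤₋, 𝔤)₊`, its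
positive-homogeneity part. -/
structure HarmonicData {g : Type} [LieRing g] [LieAlgebra ℝ g]
    {a : Type} [NormedAddCommGroup a] [InnerProductSpace ℝ a]
    [FiniteDimensional ℝ a] {r : ℕ} {P : ParabolicDatum a r}
    (S : LieSetup g P) : Type where
  /-- `ker Δ ≅ H²_ℝ(𝔤₋, 𝔤)` -/
  harmonic : Submodule ℝ S.C2
  /-- `(ker Δ)₊ ≅ H²_ℝ(𝔤₋, 𝔤)₊` -/
  harmonicPos : Submodule ℝ S.C2
  harmonicPos_le : harmonicPos ≤ harmonic

end LieSetup

section Stmt6Aux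
set_option maxHeartbeats 1000000
set_option linter.unusedSectionVars false

variable {g : Type} [LieRing g] [LieAlgebra ℝ g]
  {a : Type} [NormedAddCommGroup a] [InnerProductSpace ℝ a]
  [FiniteDimensional ℝ a] {r : ℕ} {P : ParabolicDatum a r}

lemma mem_rootSpace_iff {emb : a →ₗ[ℝ] g} {α : a} {x : g} :
    x ∈ rootSpace emb α ↔ ∀ H : a, ⁅emb H, x⁆ = ⟪α, H⟫ • x := by
  simp only [rootSpace, Submodule.mem_iInf, Module.End.mem_eigenspace_iff, LieAlgebra.ad_apply]

lemma lie_mem_rootSpace {emb : a →ₗ[ℝ] g} {α ξ : a} {x y : g}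
    (hx : x ∈ rootSpace emb α) (hy : y ∈ rootSpace emb ξ) :
    ⁅x, y⁆ ∈ rootSpace emb (α + ξ) := by
  rw [mem_rootSpace_iff] at hx hy ⊢
  intro H
  rw [leibniz_lie, hx H, hy H, smul_lie, lie_smul, inner_add_left, add_smul]

private lemma indep_eig {M : Type} [AddCommGroup M] [Module ℝ M]
    (T : a → M →ₗ[ℝ] M) (E : a → Submodule ℝ M)
    (hE : ∀ μ : a, ∀ x ∈ E μ, ∀ H : a, T H x = ⟪μ, H⟫ • x) :
    ∀ (s : Finset a) (f : a → M), (∀ μ ∈ s, f μ ∈ E μ) →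
      ∑ μ ∈ s, f μ = 0 → ∀ μ ∈ s, f μ = 0 := by
  classical
  intro s
  induction s using Finset.induction_on with
  | empty => intro f _ _ μ hμ; exact absurd hμ (Finset.notMem_empty μ)
  | @insert ν s' hν ih =>
    intro f hf hsum
    have hrest : ∀ μ ∈ s', f μ = 0 := by
      intro μ hμ
      have hH : ∀ H : a, (⟪μ, H⟫ - ⟪ν, H⟫) • f μ = 0 := by
        intro H
        have h1 : ∑ κ ∈ s', (⟪κ, H⟫ - ⟪ν, H⟫) • f κ = 0 := by
          have h3 : ∀ κ ∈ insert ν s',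
              (⟪κ, H⟫ - ⟪ν, H⟫) • f κ = T H (f κ) - ⟪ν, H⟫ • f κ := by
            intro κ hκ; rw [hE κ (f κ) (hf κ hκ) H, sub_smul]
          calc ∑ κ ∈ s', (⟪κ, H⟫ - ⟪ν, H⟫) • f κ
              = ∑ κ ∈ insert ν s', (⟪κ, H⟫ - ⟪ν, H⟫) • f κ := by
                rw [Finset.sum_insert hν, sub_self, zero_smul, zero_add]
            _ = ∑ κ ∈ insert ν s', (T H (f κ) - ⟪ν, H⟫ • f κ) :=
                Finset.sum_congr rfl h3
            _ = T H (∑ κ ∈ insert ν s', f κ)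
                  - ⟪ν, H⟫ • ∑ κ ∈ insert ν s', f κ := by
                rw [map_sum, Finset.sum_sub_distrib, Finset.smul_sum]
            _ = 0 := by rw [hsum, map_zero, smul_zero, sub_zero]
        exact ih (fun κ => (⟪κ, H⟫ - ⟪ν, H⟫) • f κ)
          (fun κ hκ => Submodule.smul_mem _ _ (hf κ (Finset.mem_insert_of_mem hκ))) h1 μ hμ
      have hc := hH (μ - ν)
      rw [← inner_sub_left] at hc
      rcases smul_eq_zero.mp hc with h | h
      · exact absurd (sub_eq_zero.mp (inner_self_eq_zero.mp h))
          (by rintro rfl; exact hν hμ)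
      · exact h
    have hν0 : f ν = 0 := by
      rw [Finset.sum_insert hν, Finset.sum_eq_zero hrest, add_zero] at hsum
      exact hsum
    intro μ hμ
    rcases Finset.mem_insert.mp hμ with rfl | h
    · exact hν0
    · exact hrest μ h

private lemma eig_component {M : Type} [AddCommGroup M] [Module ℝ M]
    (T : a → M →ₗ[ℝ] M) (E : a → Submodule ℝ M)
    (hE : ∀ μ : a, ∀ x ∈ E μ, ∀ H : a, T H x = ⟪μ, H⟫ • x)
    (p : a → Submodule ℝ M) (hpE : ∀ μ, p μ ≤ E μ)
    {x : M} {σ : a} (hx : x ∈ ⨆ μ, p μ) (hxσ : x ∈ E σ) : x ∈ p σ := by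
  obtain ⟨f, hf, hsum⟩ := (Submodule.mem_iSup_iff_exists_finsupp p x).mp hx
  classical
  set s : Finset a := insert σ f.support with hs
  set F : a → M := fun μ => if μ = σ then f μ - x else f μ with hF
  have hsf : ∑ μ ∈ s, f μ = x := by
    rw [← hsum, Finsupp.sum]
    exact (Finset.sum_subset (Finset.subset_insert σ f.support)
      (fun κ _ hκ => Finsupp.notMem_support_iff.mp hκ)).symm
  have hFsum : ∑ μ ∈ s, F μ = 0 := by
    have h4 : ∀ μ ∈ s, F μ = f μ + (if μ = σ then -x else 0) := by
      intro μ _; by_cases h : μ = σ <;> simp [hF, h, sub_eq_add_neg]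
    rw [Finset.sum_congr rfl h4, Finset.sum_add_distrib, hsf,
      Finset.sum_ite_eq' s σ (fun _ => -x), if_pos (Finset.mem_insert_self σ _)]
    exact add_neg_cancel x
  have hFE : ∀ μ ∈ s, F μ ∈ E μ := by
    intro μ _; by_cases h : μ = σ
    · subst h; simp only [hF, if_pos rfl]
      exact Submodule.sub_mem _ (hpE _ (hf _)) hxσ
    · simp only [hF, if_neg h]; exact hpE _ (hf _)
  have h0 := indep_eig T E hE s F hFE hFsum σ (Finset.mem_insert_self σ _)
  simp only [hF, if_pos rfl] at h0
  rw [← sub_eq_zero.mp h0]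
  exact hf σ

lemma height_add (α ξ : a) : P.height (α + ξ) = P.height α + P.height ξ := by
  simp [ParabolicDatum.height, map_add, Finset.sum_add_distrib]

lemma height_zero : P.height (0 : a) = 0 := by
  simp [ParabolicDatum.height]

lemma ne_zero_of_height_ne {ξ : a} (h : P.height ξ ≠ 0) : ξ ≠ 0 := by
  intro h0; rw [h0, height_zero] at h; exact h rfl

variable (S : LieSetup g P)

lemma emb_mem_rootSpace_zero (H : a) : S.emb H ∈ rootSpace S.emb (0 : a) := by
  rw [mem_rootSpace_iff]; intro H'
  rw [S.emb_abelian, inner_zero_left, zero_smul]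

lemma rootSpace_eq_bot {ξ : a} (hroot : ξ ∉ P.roots) (h0 : ξ ≠ 0) :
    rootSpace S.emb ξ = ⊥ := by
  classical
  rw [Submodule.eq_bot_iff]
  intro x hx
  set p : a → Submodule ℝ g := fun μ =>
    if μ = 0 ∨ μ ∈ P.roots then rootSpace S.emb μ else ⊥ with hp
  have hple : ∀ μ, p μ ≤ rootSpace S.emb μ := by
    intro μ; by_cases h : μ = 0 ∨ μ ∈ P.roots
    · rw [hp]; simp only [if_pos h]; exact le_rfl
    · rw [hp]; simp only [if_neg h]; exact bot_le
  have htop : (⊤ : Submodule ℝ g) ≤ ⨆ μ, p μ := by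
    rw [← S.decomp]
    apply sup_le
    · refine le_trans ?_ (le_iSup p 0)
      rw [hp]; simp
    · refine iSup₂_le fun α hα => le_trans ?_ (le_iSup p α)
      rw [hp]
      have : α = 0 ∨ α ∈ P.roots := Or.inr hα
      simp [this]
  have hx' : x ∈ p ξ := eig_component (fun H => LieAlgebra.ad ℝ g (S.emb H))
      (rootSpace S.emb) (fun μ y hy H => by
        rw [LieAlgebra.ad_apply]; exact mem_rootSpace_iff.mp hy H)
      p hple (htop Submodule.mem_top) hx
  rw [hp] at hx'
  simp only [if_neg (show ¬(ξ = 0 ∨ ξ ∈ P.roots) by tauto)] at hx'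
  exact hx'

lemma rootSpace_hneg_le_gminus {ξ : a} (h : P.height ξ < 0) :
    rootSpace S.emb ξ ≤ S.gminus := by
  by_cases hr : ξ ∈ P.roots
  · exact le_iSup₂_of_le ξ ⟨hr, h⟩ le_rfl
  · rw [rootSpace_eq_bot S hr (ne_zero_of_height_ne (ne_of_lt h))]; exact bot_le

lemma rootSpace_h0_le_g0 {ξ : a} (h : P.height ξ = 0) :
    rootSpace S.emb ξ ≤ S.g0 := by
  by_cases h0 : ξ = 0
  · subst h0; exact le_sup_left
  · by_cases hr : ξ ∈ P.roots
    · exact le_sup_of_le_right (le_iSup₂_of_le ξ ⟨hr, h⟩ le_rfl)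
    · rw [rootSpace_eq_bot S hr h0]; exact bot_le

lemma emb_mem_g0 (H : a) : S.emb H ∈ S.g0 :=
  (le_sup_left : rootSpace S.emb (0 : a) ≤ _) (emb_mem_rootSpace_zero S H)

lemma g0_induction {x : g} (hx : x ∈ S.g0) {Q : g → Prop}
    (h0 : ∀ z ∈ rootSpace S.emb (0 : a), Q z)
    (hr : ∀ α ∈ P.roots, P.height α = 0 → ∀ y ∈ rootSpace S.emb α, Q y)
    (hzero : Q 0)
    (hadd : ∀ u v : g, Q u → Q v → Q (u + v)) : Q x := by
  obtain ⟨y, hy, z, hz, rfl⟩ := Submodule.mem_sup.mp hx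
  refine hadd _ _ (h0 y hy) ?_
  have hz' : z ∈ ⨆ α, ⨆ _ : α ∈ {β | β ∈ P.roots ∧ P.height β = 0},
      rootSpace S.emb α := hz
  rw [iSup_subtype'] at hz'
  exact Submodule.iSup_induction' (motive := fun w _ => Q w) _
    (fun i w hw => hr i.1 i.2.1 i.2.2 w hw) hzero (fun _ _ _ _ => hadd _ _) hz'

lemma gminus_induction {u : g} (hu : u ∈ S.gminus) {Q : g → Prop}
    (hr : ∀ δ ∈ P.roots, P.height δ < 0 → ∀ y ∈ rootSpace S.emb δ, Q y)
    (hzero : Q 0)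
    (hadd : ∀ u v : g, Q u → Q v → Q (u + v)) : Q u := by
  have hu' : u ∈ ⨆ α, ⨆ _ : α ∈ {β | β ∈ P.roots ∧ P.height β < 0},
      rootSpace S.emb α := hu
  rw [iSup_subtype'] at hu'
  exact Submodule.iSup_induction' (motive := fun w _ => Q w) _
    (fun i w hw => hr i.1 i.2.1 i.2.2 w hw) hzero (fun _ _ _ _ => hadd _ _) hu'

lemma lie_g0_gminus_mem {x u : g} (hx : x ∈ S.g0) (hu : u ∈ S.gminus) :
    ⁅x, u⁆ ∈ S.gminus := by
  have hz0 : ⁅x, (0 : g)⁆ ∈ S.gminus := by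
    rw [lie_zero]; exact Submodule.zero_mem _
  have hadd' : ∀ p q : g, ⁅x, p⁆ ∈ S.gminus → ⁅x, q⁆ ∈ S.gminus →
      ⁅x, p + q⁆ ∈ S.gminus := fun p q hp hq => by
    rw [lie_add]; exact Submodule.add_mem _ hp hq
  refine gminus_induction S hu (Q := fun w => ⁅x, w⁆ ∈ S.gminus)
    (fun δ hδ hδneg y hy => ?_) hz0 hadd'
  have hz0' : ⁅(0 : g), y⁆ ∈ S.gminus := by
    rw [zero_lie]; exact Submodule.zero_mem _
  have hadd'' : ∀ p q : g, ⁅p, y⁆ ∈ S.gminus → ⁅q, y⁆ ∈ S.gminus →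
      ⁅p + q, y⁆ ∈ S.gminus := fun p q hp hq => by
    rw [add_lie]; exact Submodule.add_mem _ hp hq
  refine g0_induction S hx (Q := fun w => ⁅w, y⁆ ∈ S.gminus)
    (fun z hz => ?_) (fun α hα hα0 w hw => ?_) hz0' hadd''
  · exact rootSpace_hneg_le_gminus S
      (by rw [height_add, height_zero, zero_add]; exact hδneg)
      (lie_mem_rootSpace hz hy)
  · exact rootSpace_hneg_le_gminus S
      (by rw [height_add, hα0, zero_add]; exact hδneg)
      (lie_mem_rootSpace hw hy)

lemma lie_g0_g0_mem {x y : g} (hx : x ∈ S.g0) (hy : y ∈ S.g0) :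
    ⁅x, y⁆ ∈ S.g0 := by
  have hz0 : ⁅x, (0 : g)⁆ ∈ S.g0 := by
    rw [lie_zero]; exact Submodule.zero_mem _
  have hadd' : ∀ p q : g, ⁅x, p⁆ ∈ S.g0 → ⁅x, q⁆ ∈ S.g0 →
      ⁅x, p + q⁆ ∈ S.g0 := fun p q hp hq => by
    rw [lie_add]; exact Submodule.add_mem _ hp hq
  refine g0_induction S hy (Q := fun w => ⁅x, w⁆ ∈ S.g0)
    (fun z hz => ?_) (fun α hα hα0 w hw => ?_) hz0 hadd'
  · have hz0' : ⁅(0 : g), z⁆ ∈ S.g0 := by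
      rw [zero_lie]; exact Submodule.zero_mem _
    have hadd'' : ∀ p q : g, ⁅p, z⁆ ∈ S.g0 → ⁅q, z⁆ ∈ S.g0 →
        ⁅p + q, z⁆ ∈ S.g0 := fun p q hp hq => by
      rw [add_lie]; exact Submodule.add_mem _ hp hq
    refine g0_induction S hx (Q := fun w => ⁅w, z⁆ ∈ S.g0)
      (fun z' hz' => ?_) (fun α' hα' hα0' w' hw' => ?_) hz0' hadd''
    · exact rootSpace_h0_le_g0 S
        (by simp [height_add, height_zero])
        (lie_mem_rootSpace hz' hz)
    · exact rootSpace_h0_le_g0 S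
        (by simp [height_add, height_zero, hα0'])
        (lie_mem_rootSpace hw' hz)
  · have hz0' : ⁅(0 : g), w⁆ ∈ S.g0 := by
      rw [zero_lie]; exact Submodule.zero_mem _
    have hadd'' : ∀ p q : g, ⁅p, w⁆ ∈ S.g0 → ⁅q, w⁆ ∈ S.g0 →
        ⁅p + q, w⁆ ∈ S.g0 := fun p q hp hq => by
      rw [add_lie]; exact Submodule.add_mem _ hp hq
    refine g0_induction S hx (Q := fun w' => ⁅w', w⁆ ∈ S.g0)
      (fun z' hz' => ?_) (fun α' hα' hα0' w' hw' => ?_) hz0' hadd''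
    · exact rootSpace_h0_le_g0 S
        (by simp [height_add, height_zero, hα0])
        (lie_mem_rootSpace hz' hw)
    · exact rootSpace_h0_le_g0 S
        (by simp [height_add, hα0, hα0'])
        (lie_mem_rootSpace hw' hw)


lemma update_zero' {M : Type} (u v w : M) :
    Function.update ![u, v] (0 : Fin 2) w = ![w, v] := by
  funext i; fin_cases i <;> simp [Function.update]

lemma update_one' {M : Type} (u v w : M) :
    Function.update ![u, v] (1 : Fin 2) w = ![u, w] := by
  funext i; fin_cases i <;> simp [Function.update]

noncomputable def gdot {x : g} (hx : x ∈ S.g0) (u : ↥S.gminus) : ↥S.gminus :=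
  ⟨⁅x, (u : g)⁆, lie_g0_gminus_mem S hx u.2⟩

lemma pm_lie_eq {x : g} (hx : x ∈ S.g0) (u : ↥S.gminus) :
    S.pm ⁅x, (u : g)⁆ = gdot S hx u :=
  Subtype.ext (S.proj_id _ (lie_g0_gminus_mem S hx u.2))

lemma actF_eq {x : g} (hx : x ∈ S.g0) (Ω : S.C2) (u v : ↥S.gminus) :
    S.actF x Ω u v
      = ⁅x, Ω ![u, v]⁆ - Ω ![gdot S hx u, v] - Ω ![u, gdot S hx v] := by
  rw [LieSetup.actF, pm_lie_eq S hx, pm_lie_eq S hx]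

lemma C2_ext {Ω₁ Ω₂ : S.C2} (h : ∀ u v : ↥S.gminus, Ω₁ ![u, v] = Ω₂ ![u, v]) :
    Ω₁ = Ω₂ := by
  ext m
  have hm : m = ![m 0, m 1] := by
    funext i; fin_cases i <;> simp
  rw [hm]; exact h _ _

lemma C2_sub_fst (Ω : S.C2) (u u' v : ↥S.gminus) :
    Ω ![u - u', v] = Ω ![u, v] - Ω ![u', v] := by
  have h := Ω.map_update_sub ![u, v] 0 u u'
  rwa [update_zero', update_zero', update_zero'] at h

lemma C2_sub_snd (Ω : S.C2) (u v v' : ↥S.gminus) :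
    Ω ![u, v - v'] = Ω ![u, v] - Ω ![u, v'] := by
  have h := Ω.map_update_sub ![u, v] 1 v v'
  rwa [update_one', update_one', update_one'] at h

variable (A : ActionData S)

lemma act_comm {x y : g} (hx : x ∈ S.g0) (hy : y ∈ S.g0) (Ω : S.C2) :
    A.act x (A.act y Ω) = A.act y (A.act x Ω) + A.act ⁅x, y⁆ Ω := by
  have hxy : ⁅x, y⁆ ∈ S.g0 := lie_g0_g0_mem S hx hy
  apply C2_ext S
  intro u v
  rw [AlternatingMap.add_apply]
  simp only [A.act_apply, actF_eq S hx, actF_eq S hy, actF_eq S hxy]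
  have key2 : ∀ w : ↥S.gminus, gdot S hy (gdot S hx w)
      = gdot S hx (gdot S hy w) - gdot S hxy w := by
    intro w
    apply Subtype.ext
    show ⁅y, ⁅x, (w : g)⁆⁆ = ((gdot S hx (gdot S hy w) - gdot S hxy w : ↥S.gminus) : g)
    rw [AddSubgroupClass.coe_sub]
    show ⁅y, ⁅x, (w : g)⁆⁆ = ⁅x, ⁅y, (w : g)⁆⁆ - ⁅⁅x, y⁆, (w : g)⁆
    rw [lie_lie]; abel
  have j1 : ⁅x, ⁅y, Ω ![u, v]⁆⁆
      = ⁅y, ⁅x, Ω ![u, v]⁆⁆ + ⁅⁅x, y⁆, Ω ![u, v]⁆ := by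
    rw [lie_lie]; abel
  rw [key2 u, key2 v, C2_sub_fst, C2_sub_snd]
  simp only [lie_sub]
  rw [j1]
  abel

noncomputable def FullWeight (μ : a) : Submodule ℝ S.C2 :=
  ⨅ H : a, Module.End.eigenspace (A.act (S.emb H)) ⟪μ, H⟫

lemma mem_FullWeight {μ : a} {Ω : S.C2} :
    Ω ∈ FullWeight S A μ ↔ ∀ H : a, A.act (S.emb H) Ω = ⟪μ, H⟫ • Ω := by
  simp [FullWeight, Submodule.mem_iInf, Module.End.mem_eigenspace_iff]

lemma weight_raise {α μ : a} {x : g} (hx : x ∈ rootSpace S.emb α) (hxg : x ∈ S.g0)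
    {Ω : S.C2} (hΩ : Ω ∈ FullWeight S A μ) :
    A.act x Ω ∈ FullWeight S A (μ + α) := by
  rw [mem_FullWeight] at hΩ ⊢
  intro H
  have hcomm := act_comm S A (emb_mem_g0 S H) hxg Ω
  rw [mem_rootSpace_iff.mp hx H] at hcomm
  rw [hcomm, hΩ H]
  simp only [map_smul, LinearMap.smul_apply]
  rw [inner_add_left, add_smul]

lemma weightvec_mem_FullWeight {Ω : S.C2} {σ : a} (h : S.IsWeightVector Ω σ) :
    Ω ∈ FullWeight S A σ := by
  rw [mem_FullWeight]
  intro H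
  apply C2_ext S
  intro u v
  rw [A.act_apply, h.2 H u v, AlternatingMap.smul_apply]

lemma act_eq_zero_of_lowest {Ω : S.C2} {τ : a} (h : S.IsLowestWeightVector Ω τ)
    {α : a} (hα : α ∈ P.g0negRoots) {x : g} (hx : x ∈ rootSpace S.emb α) :
    A.act x Ω = 0 := by
  apply C2_ext S
  intro u v
  rw [A.act_apply, h.2 α hα x hx u v, AlternatingMap.zero_apply]


end Stmt6Aux

section Stmt6Aux2
set_option maxHeartbeats 1000000
set_option linter.unusedSectionVars false

variable {g : Type} [LieRing g] [LieAlgebra ℝ g]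
  {a : Type} [NormedAddCommGroup a] [InnerProductSpace ℝ a]
  [FiniteDimensional ℝ a] {r : ℕ} {P : ParabolicDatum a r}

/-- zero-letter words on `u0` -/
inductive ZW (S : LieSetup g P) (A : ActionData S) (u0 : S.C2) : S.C2 → Prop
  | base : ZW S A u0 u0
  | zstep {z : g} (hz : z ∈ rootSpace S.emb (0 : a)) {s : S.C2}
      (hs : ZW S A u0 s) : ZW S A u0 (A.act z s)

/-- words in zero letters and raising letters on `u0` -/
inductive SW (S : LieSetup g P) (A : ActionData S) (u0 : S.C2) : S.C2 → Prop
  | base : SW S A u0 u0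
  | zstep {z : g} (hz : z ∈ rootSpace S.emb (0 : a)) {s : S.C2}
      (hs : SW S A u0 s) : SW S A u0 (A.act z s)
  | rstep {α : a} (hα : α ∈ P.roots) (h0 : P.height α = 0)
      (hpos : ∀ i, 0 ≤ P.b.repr α i) {x : g} (hx : x ∈ rootSpace S.emb α)
      {s : S.C2} (hs : SW S A u0 s) : SW S A u0 (A.act x s)

variable (S : LieSetup g P) (A : ActionData S)

noncomputable def Z0 (u0 : S.C2) : Submodule ℝ S.C2 :=
  Submodule.span ℝ {s | ZW S A u0 s}

noncomputable def Vsp (u0 : S.C2) : Submodule ℝ S.C2 :=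
  Submodule.span ℝ {s | SW S A u0 s}

lemma act_z_Z0 {u0 : S.C2} {z : g} (hz : z ∈ rootSpace S.emb (0 : a))
    {Ω : S.C2} (hΩ : Ω ∈ Z0 S A u0) : A.act z Ω ∈ Z0 S A u0 := by
  have h : Submodule.map (A.act z) (Z0 S A u0) ≤ Z0 S A u0 := by
    rw [Z0, Submodule.map_span]
    apply Submodule.span_mono
    rintro t ⟨s, hs, rfl⟩
    exact ZW.zstep hz hs
  exact h (Submodule.mem_map_of_mem hΩ)

lemma act_z_Vsp {u0 : S.C2} {z : g} (hz : z ∈ rootSpace S.emb (0 : a))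
    {Ω : S.C2} (hΩ : Ω ∈ Vsp S A u0) : A.act z Ω ∈ Vsp S A u0 := by
  have h : Submodule.map (A.act z) (Vsp S A u0) ≤ Vsp S A u0 := by
    rw [Vsp, Submodule.map_span]
    apply Submodule.span_mono
    rintro t ⟨s, hs, rfl⟩
    exact SW.zstep hz hs
  exact h (Submodule.mem_map_of_mem hΩ)

lemma act_r_Vsp {u0 : S.C2} {α : a} (hα : α ∈ P.roots) (h0 : P.height α = 0)
    (hpos : ∀ i, 0 ≤ P.b.repr α i) {x : g} (hx : x ∈ rootSpace S.emb α)
    {Ω : S.C2} (hΩ : Ω ∈ Vsp S A u0) : A.act x Ω ∈ Vsp S A u0 := by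
  have h : Submodule.map (A.act x) (Vsp S A u0) ≤ Vsp S A u0 := by
    rw [Vsp, Submodule.map_span]
    apply Submodule.span_mono
    rintro t ⟨s, hs, rfl⟩
    exact SW.rstep hα h0 hpos hx hs
  exact h (Submodule.mem_map_of_mem hΩ)

lemma mem_g0negRoots {α : a} (hα : α ∈ P.g0negRoots) :
    α ∈ P.roots ∧ P.height α = 0 ∧ ∀ i, P.b.repr α i ≤ 0 := hα

lemma pushf {u0 : S.C2}
    (hlow : ∀ α ∈ P.g0negRoots, ∀ x ∈ rootSpace S.emb α, A.act x u0 = 0)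
    {s : S.C2} (hs : SW S A u0 s) :
    ∀ {α : a}, α ∈ P.g0negRoots → ∀ {x : g}, x ∈ rootSpace S.emb α →
      A.act x s ∈ Vsp S A u0 := by
  induction hs with
  | base =>
    intro α hα x hx
    rw [hlow α hα x hx]
    exact Submodule.zero_mem _
  | @zstep z hz s' hs' ih =>
    intro α hα x hx
    obtain ⟨hαr, hαh, hαneg⟩ := mem_g0negRoots hα
    have hxg : x ∈ S.g0 := rootSpace_h0_le_g0 S hαh hx
    have hzg : z ∈ S.g0 := rootSpace_h0_le_g0 S height_zero hz
    rw [act_comm S A hxg hzg s']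
    refine Submodule.add_mem _ (act_z_Vsp S A hz (ih hα hx)) ?_
    have hbr : ⁅x, z⁆ ∈ rootSpace S.emb α := by
      have h := lie_mem_rootSpace hx hz; rwa [add_zero] at h
    exact ih hα hbr
  | @rstep β hβ hβ0 hβpos x' hx' s' hs' ih =>
    intro α hα x hx
    obtain ⟨hαr, hαh, hαneg⟩ := mem_g0negRoots hα
    have hxg : x ∈ S.g0 := rootSpace_h0_le_g0 S hαh hx
    have hx'g : x' ∈ S.g0 := rootSpace_h0_le_g0 S hβ0 hx'
    rw [act_comm S A hxg hx'g s']
    refine Submodule.add_mem _ (act_r_Vsp S A hβ hβ0 hβpos hx' (ih hα hx)) ?_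
    have hbr : ⁅x, x'⁆ ∈ rootSpace S.emb (α + β) := lie_mem_rootSpace hx hx'
    by_cases hξ0 : α + β = 0
    · rw [hξ0] at hbr
      exact act_z_Vsp S A hbr (Submodule.subset_span hs')
    · have hξh : P.height (α + β) = 0 := by rw [height_add, hαh, hβ0, add_zero]
      by_cases hξr : α + β ∈ P.roots
      · rcases P.coeff_sign _ hξr with hpos | hneg
        · exact Submodule.subset_span (SW.rstep hξr hξh hpos hbr hs')
        · exact ih ⟨hξr, hξh, hneg⟩ hbr
      · rw [rootSpace_eq_bot S hξr hξ0, Submodule.mem_bot] at hbr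
        rw [hbr, map_zero, LinearMap.zero_apply]
        exact Submodule.zero_mem _

lemma Vsp_invariant {u0 : S.C2}
    (hlow : ∀ α ∈ P.g0negRoots, ∀ x ∈ rootSpace S.emb α, A.act x u0 = 0) :
    ∀ x ∈ S.g0, ∀ Ω ∈ Vsp S A u0, A.act x Ω ∈ Vsp S A u0 := by
  intro x hx Ω hΩ
  have hzero : A.act (0 : g) Ω ∈ Vsp S A u0 := by
    rw [map_zero, LinearMap.zero_apply]; exact Submodule.zero_mem _
  have hadd : ∀ p q : g, A.act p Ω ∈ Vsp S A u0 → A.act q Ω ∈ Vsp S A u0 →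
      A.act (p + q) Ω ∈ Vsp S A u0 := fun p q hp hq => by
    rw [map_add, LinearMap.add_apply]; exact Submodule.add_mem _ hp hq
  refine g0_induction S hx (Q := fun y => A.act y Ω ∈ Vsp S A u0)
    (fun z hz => act_z_Vsp S A hz hΩ) (fun α hα hα0 y hy => ?_) hzero hadd
  rcases P.coeff_sign α hα with hpos | hneg
  · exact act_r_Vsp S A hα hα0 hpos hy hΩ
  · refine Submodule.span_induction (p := fun Ω' _ => A.act y Ω' ∈ Vsp S A u0)
      (fun s hs => pushf S A hlow hs ⟨hα, hα0, hneg⟩ hy) ?_ ?_ ?_ hΩ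
    · show A.act y (0 : S.C2) ∈ Vsp S A u0
      rw [map_zero]; exact Submodule.zero_mem _
    · intro p q _ _ hp hq
      show A.act y (p + q) ∈ Vsp S A u0
      rw [map_add]; exact Submodule.add_mem _ hp hq
    · intro c p _ hp
      show A.act y (c • p) ∈ Vsp S A u0
      rw [map_smul]; exact Submodule.smul_mem _ _ hp

lemma sw_le_V (V : Submodule ℝ S.C2)
    (hinv : ∀ x ∈ S.g0, ∀ Ω ∈ V, A.act x Ω ∈ V)
    {u0 : S.C2} (hu0V : u0 ∈ V) {s : S.C2} (hs : SW S A u0 s) : s ∈ V := by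
  induction hs with
  | base => exact hu0V
  | zstep hz _ ih => exact hinv _ (rootSpace_h0_le_g0 S height_zero hz) _ ih
  | rstep hα h0 hpos hx _ ih => exact hinv _ (rootSpace_h0_le_g0 S h0 hx) _ ih

lemma zw_weight {u0 : S.C2} {ρ : a} (hu0w : u0 ∈ FullWeight S A ρ)
    {s : S.C2} (hs : ZW S A u0 s) : s ∈ FullWeight S A ρ := by
  induction hs with
  | base => exact hu0w
  | zstep hz _ ih =>
    have h := weight_raise S A hz (rootSpace_h0_le_g0 S height_zero hz) ih
    rwa [add_zero] at h

lemma Z0_le_FullWeight {u0 : S.C2} {ρ : a} (hu0w : u0 ∈ FullWeight S A ρ) :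
    Z0 S A u0 ≤ FullWeight S A ρ :=
  Submodule.span_le.mpr fun _ hs => zw_weight S A hu0w hs

open Classical in
noncomputable def Afam (u0 : S.C2) (ρ : a) : a → Submodule ℝ S.C2 := fun μ =>
  if μ = ρ then Z0 S A u0
  else if ∀ i, 0 ≤ P.b.repr (μ - ρ) i then FullWeight S A μ else ⊥

lemma Afam_le {u0 : S.C2} {ρ : a} (hu0w : u0 ∈ FullWeight S A ρ) (μ : a) :
    Afam S A u0 ρ μ ≤ FullWeight S A μ := by
  rw [Afam]
  by_cases h1 : μ = ρ
  · rw [if_pos h1, h1]; exact Z0_le_FullWeight S A hu0w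
  · rw [if_neg h1]
    by_cases h2 : ∀ i, 0 ≤ P.b.repr (μ - ρ) i
    · rw [if_pos h2]
    · rw [if_neg h2]; exact bot_le

lemma act_iSup {p : a → Submodule ℝ S.C2} {T : S.C2 →ₗ[ℝ] S.C2}
    (h : ∀ μ : a, ∀ t ∈ p μ, T t ∈ ⨆ ν, p ν) {Ω : S.C2} (hΩ : Ω ∈ ⨆ μ, p μ) :
    T Ω ∈ ⨆ μ, p μ := by
  refine Submodule.iSup_induction' (motive := fun t _ => T t ∈ ⨆ ν, p ν) _ h ?_ ?_ hΩ
  · show T 0 ∈ ⨆ ν, p ν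
    rw [map_zero]; exact Submodule.zero_mem _
  · intro s t _ _ hs ht
    show T (s + t) ∈ ⨆ ν, p ν
    rw [map_add]; exact Submodule.add_mem _ hs ht

lemma sw_mem_Big {u0 : S.C2} {ρ : a} (hu0w : u0 ∈ FullWeight S A ρ)
    {s : S.C2} (hs : SW S A u0 s) : s ∈ ⨆ μ, Afam S A u0 ρ μ := by
  induction hs with
  | base =>
    refine le_iSup (Afam S A u0 ρ) ρ ?_
    rw [Afam, if_pos rfl]
    exact Submodule.subset_span ZW.base
  | @zstep z hz s' _ ih =>
    refine act_iSup S (fun μ t ht => ?_) ih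
    have hzg : z ∈ S.g0 := rootSpace_h0_le_g0 S height_zero hz
    rw [Afam] at ht
    by_cases h1 : μ = ρ
    · rw [if_pos h1] at ht
      refine le_iSup (Afam S A u0 ρ) μ ?_
      rw [Afam, if_pos h1]
      exact act_z_Z0 S A hz ht
    · rw [if_neg h1] at ht
      by_cases h2 : ∀ i, 0 ≤ P.b.repr (μ - ρ) i
      · rw [if_pos h2] at ht
        have h3 := weight_raise S A hz hzg ht
        rw [add_zero] at h3
        refine le_iSup (Afam S A u0 ρ) μ ?_
        rw [Afam, if_neg h1, if_pos h2]
        exact h3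
      · rw [if_neg h2, Submodule.mem_bot] at ht
        rw [ht, map_zero]
        exact Submodule.zero_mem _
  | @rstep α hα h0 hpos x hx s' _ ih =>
    refine act_iSup S (fun μ t ht => ?_) ih
    have hxg : x ∈ S.g0 := rootSpace_h0_le_g0 S h0 hx
    have hαne : α ≠ 0 := P.root_ne_zero α hα
    rw [Afam] at ht
    by_cases h1 : μ = ρ
    · rw [if_pos h1] at ht
      have ht' : t ∈ FullWeight S A ρ := Z0_le_FullWeight S A hu0w ht
      have h3 := weight_raise S A hx hxg ht'
      refine le_iSup (Afam S A u0 ρ) (ρ + α) ?_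
      rw [Afam, if_neg (by
        intro hc
        exact hαne (by rwa [add_eq_left] at hc)), if_pos (by
        intro i
        rw [show ρ + α - ρ = α by abel]
        exact hpos i)]
      exact h3
    · rw [if_neg h1] at ht
      by_cases h2 : ∀ i, 0 ≤ P.b.repr (μ - ρ) i
      · rw [if_pos h2] at ht
        have h3 := weight_raise S A hx hxg ht
        refine le_iSup (Afam S A u0 ρ) (μ + α) ?_
        have hsub : μ + α - ρ = (μ - ρ) + α := by abel
        rw [Afam, if_neg (by
          intro hc
          apply h1
          have hz' : μ - ρ = 0 := by
            have hrepr : ∀ i, P.b.repr (μ - ρ) i = 0 := by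
              intro i
              have hc' : α = -(μ - ρ) := by rw [← hc]; abel
              have h5 := hpos i
              rw [hc', map_neg, Finsupp.neg_apply] at h5
              exact le_antisymm (by linarith) (h2 i)
            have : P.b.repr (μ - ρ) = 0 := by
              ext i; rw [hrepr i]; rfl
            exact (LinearEquiv.map_eq_zero_iff P.b.repr).mp this
          rw [sub_eq_zero] at hz'
          exact hz'), if_pos (by
          intro i
          rw [hsub, map_add, Finsupp.add_apply]
          exact add_nonneg (h2 i) (hpos i))]
        exact h3
      · rw [if_neg h2, Submodule.mem_bot] at ht
        rw [ht, map_zero]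
        exact Submodule.zero_mem _


lemma master (V : Submodule ℝ S.C2)
    (hinv : ∀ x ∈ S.g0, ∀ Ω ∈ V, A.act x Ω ∈ V)
    (hirr : ∀ W : Submodule ℝ S.C2, W ≤ V →
      (∀ x ∈ S.g0, ∀ Ω ∈ W, A.act x Ω ∈ W) → W = ⊥ ∨ W = V)
    (u0 : S.C2) (hu0V : u0 ∈ V) (ρ : a) (hu0 : S.IsLowestWeightVector u0 ρ)
    {w : S.C2} (hw : w ∈ V) {σ : a} (hwσ : w ∈ FullWeight S A σ) :
    w ∈ Afam S A u0 ρ σ := by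
  have hlow : ∀ α ∈ P.g0negRoots, ∀ x ∈ rootSpace S.emb α, A.act x u0 = 0 :=
    fun α hα x hx => act_eq_zero_of_lowest S A hu0 hα hx
  have hu0w : u0 ∈ FullWeight S A ρ := weightvec_mem_FullWeight S A hu0.1
  have hle : Vsp S A u0 ≤ V :=
    Submodule.span_le.mpr fun s hs => sw_le_V S A V hinv hu0V hs
  have hVsp : Vsp S A u0 = V := by
    rcases hirr _ hle (Vsp_invariant S A hlow) with h | h
    · exfalso
      apply hu0.1.1
      have hmem : u0 ∈ Vsp S A u0 := Submodule.subset_span SW.base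
      rw [h, Submodule.mem_bot] at hmem
      exact hmem
    · exact h
  have hBig : w ∈ ⨆ μ, Afam S A u0 ρ μ := by
    rw [← hVsp] at hw
    exact (Submodule.span_le.mpr fun s hs => sw_mem_Big S A hu0w hs) hw
  exact eig_component (fun H => A.act (S.emb H)) (FullWeight S A)
    (fun μ x hx H => (mem_FullWeight S A).mp hx H) (Afam S A u0 ρ)
    (Afam_le S A hu0w) hBig hwσ

lemma memV_act_z {β γ ζ : a} {z : g} (hz : z ∈ rootSpace S.emb (0 : a))
    {Ω : S.C2} (h : S.MemV Ω β γ ζ) : S.MemV (A.act z Ω) β γ ζ := by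
  have hzg : z ∈ S.g0 := rootSpace_h0_le_g0 S height_zero hz
  constructor
  · intro u v
    rw [A.act_apply, actF_eq S hzg]
    refine Submodule.sub_mem _ (Submodule.sub_mem _ ?_ (h.1 _ _)) (h.1 _ _)
    have h2 := lie_mem_rootSpace hz (h.1 u v)
    rwa [zero_add] at h2
  · intro δ hδ ε hε hne u v hu hv
    rw [A.act_apply, actF_eq S hzg]
    have h1 : Ω ![u, v] = 0 := h.2 δ hδ ε hε hne u v hu hv
    have hud : ((gdot S hzg u : ↥S.gminus) : g) ∈ rootSpace S.emb δ := by
      have h2 := lie_mem_rootSpace hz hu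
      rwa [zero_add] at h2
    have hvd : ((gdot S hzg v : ↥S.gminus) : g) ∈ rootSpace S.emb ε := by
      have h2 := lie_mem_rootSpace hz hv
      rwa [zero_add] at h2
    rw [h1, h.2 δ hδ ε hε hne _ v hud hv, h.2 δ hδ ε hε hne u _ hu hvd, lie_zero]
    simp

/-- `V_{β,γ,ζ}` as a submodule -/
noncomputable def memVsub (β γ ζ : a) : Submodule ℝ S.C2 where
  carrier := {Ω | S.MemV Ω β γ ζ}
  add_mem' := by
    rintro Ω₁ Ω₂ ⟨h11, h12⟩ ⟨h21, h22⟩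
    constructor
    · intro u v
      rw [AlternatingMap.add_apply]
      exact Submodule.add_mem _ (h11 u v) (h21 u v)
    · intro δ hδ ε hε hne u v hu hv
      rw [AlternatingMap.add_apply, h12 δ hδ ε hε hne u v hu hv,
        h22 δ hδ ε hε hne u v hu hv, add_zero]
  zero_mem' := by
    constructor
    · intro u v
      rw [AlternatingMap.zero_apply]
      exact Submodule.zero_mem _
    · intro δ hδ ε hε hne u v hu hv
      rw [AlternatingMap.zero_apply]
  smul_mem' := by
    rintro c Ω ⟨h1, h2⟩
    constructor
    · intro u v
      rw [AlternatingMap.smul_apply]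
      exact Submodule.smul_mem _ _ (h1 u v)
    · intro δ hδ ε hε hne u v hu hv
      rw [AlternatingMap.smul_apply, h2 δ hδ ε hε hne u v hu hv, smul_zero]

lemma Z0_le_memV {β γ ζ : a} {u0 : S.C2} (h : S.MemV u0 β γ ζ) {w : S.C2}
    (hw : w ∈ Z0 S A u0) : S.MemV w β γ ζ := by
  have hle : Z0 S A u0 ≤ memVsub S β γ ζ := by
    apply Submodule.span_le.mpr
    intro s hs
    induction hs with
    | base => exact h
    | zstep hz _ ih => exact memV_act_z S A hz ih
  exact hle hw

end Stmt6Aux2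

/-- Proposition 3.1.  Let `𝔤` be a real semisimple Lie
algebra with parabolic subalgebra `𝔭` inducing `𝔤 = 𝔤₋ ⊕ 𝔤₀ ⊕ 𝔭₊`, and let
`V ≤ Λ²(𝔤₋)* ⊗ 𝔤` be a `𝔤₀`-irreducible subrepresentation.  Suppose there
is a `𝔤₀` lowest weight vector `v ∈ V` contained in `V_{β,γ,ζ}`.  Then every
`𝔤₀` lowest weight vector in `V` is contained in `V_{β,γ,ζ}`. -/
theorem stmt_6 {g : Type} [LieRing g] [LieAlgebra ℝ g]
    {a : Type} [NormedAddCommGroup a] [InnerProductSpace ℝ a]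
    [FiniteDimensional ℝ a] {r : ℕ} {P : ParabolicDatum a r}
    (hsemisimple : LieAlgebra.IsSemisimple ℝ g)
    (S : LieSetup g P) (A : ActionData S)
    (V : Submodule ℝ S.C2)
    (hinv : ∀ x ∈ S.g0, ∀ Ω ∈ V, A.act x Ω ∈ V)
    (hne : V ≠ ⊥)
    (hirr : ∀ W : Submodule ℝ S.C2, W ≤ V →
      (∀ x ∈ S.g0, ∀ Ω ∈ W, A.act x Ω ∈ W) → W = ⊥ ∨ W = V)
    (β γ : a) (hβ : β ∈ P.posP) (hγ : γ ∈ P.posP) (ζ : a) (hζ : ζ ∈ P.roots)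
    (v : S.C2) (hvV : v ∈ V) (τ : a)
    (hlw : S.IsLowestWeightVector v τ) (hvmem : S.MemV v β γ ζ) :
    ∀ w ∈ V, ∀ σ : a, S.IsLowestWeightVector w σ → S.MemV w β γ ζ := by
  intro w hwV σ hlww
  have hwFW : w ∈ FullWeight S A σ := weightvec_mem_FullWeight S A hlww.1
  have h1 := master S A V hinv hirr v hvV τ hlw hwV hwFW
  by_cases hστ : σ = τ
  · rw [Afam, if_pos hστ] at h1
    exact Z0_le_memV S A hvmem h1
  · exfalso
    rw [Afam, if_neg hστ] at h1
    by_cases hpos : ∀ i, 0 ≤ P.b.repr (σ - τ) i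
    · rw [if_pos hpos] at h1
      have hvFW : v ∈ FullWeight S A τ := weightvec_mem_FullWeight S A hlw.1
      have h2 := master S A V hinv hirr w hwV σ hlww hvV hvFW
      rw [Afam] at h2
      by_cases hτσ : τ = σ
      · exact hστ hτσ.symm
      rw [if_neg hτσ] at h2
      by_cases hpos2 : ∀ i, 0 ≤ P.b.repr (τ - σ) i
      · apply hστ
        have hrepr : ∀ i, P.b.repr (σ - τ) i = 0 := by
          intro i
          have h5 := hpos2 i
          rw [show τ - σ = -(σ - τ) by abel, map_neg, Finsupp.neg_apply] at h5
          linarith [hpos i]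
        have h6 : P.b.repr (σ - τ) = 0 := by
          ext i; rw [hrepr i]; rfl
        have h7 := (LinearEquiv.map_eq_zero_iff P.b.repr).mp h6
        rwa [sub_eq_zero] at h7
      · rw [if_neg hpos2, Submodule.mem_bot] at h2
        exact hlw.1.1 h2
    · rw [if_neg hpos, Submodule.mem_bot] at h1
      exact hlww.1.1 h1
end

section
/- Let 𝔤 be a real semisimple Lie algebra with parabolic subalgebra 𝔭 determined by Î ⊆ Δ̂⁰ and grading element E. Suppose τ ∈ 𝔞* is a restricted weight such that τ(E) > 0 and τ has some negative coefficient when expressed in the basis of simple restricted roots. Then there exists c₀ ∈ ker τ such that ν(c₀) > 0 for all ν ∈ Δ̂⁺(𝔭⁺). -/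
/-!
We model the structure theory of a real semisimple Lie algebra `𝔤` with a
maximally noncompact `θ`-stable Cartan subalgebra as follows.  The noncompact
part `𝔞` of the Cartan subalgebra is modelled by a finite-dimensional real
inner product space `a`, the inner product being the restriction of the
Killing form (which is positive definite on `𝔞`).  Via the musical
isomorphism `♯ : 𝔞* → 𝔞` determined by the Killing form, restricted roots
(and more general functionals `τ ∈ 𝔞*`) are recorded as *elements* of `a`;
evaluation `α(H)` becomes the inner product `⟪α, H⟫`.
-/

open scoped RealInnerProductSpace

/-- A parabolic datum together with the grading element `E ∈ 𝔞`
(the element with `β_i(E) = 1` for `β_i ∈ Î` and `β_i(E) = 0` otherwise,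
so that `α(E) = h_Î(α)` for every restricted root) and the restricted
fundamental weights `λ̂_1, …, λ̂_r ∈ 𝔞* ≅ 𝔞`, characterised by
`⟪λ̂_i, β_j⟫ = δ_{ij} |β_j|²/2`. -/
structure GradedParabolicDatum (a : Type) [NormedAddCommGroup a]
    [InnerProductSpace ℝ a] [FiniteDimensional ℝ a] (r : ℕ)
    extends ParabolicDatum a r where
  /-- the grading element `E` -/
  E : a
  hE : ∀ i, ⟪b i, E⟫ = if i ∈ Ihat then 1 else 0
  /-- the restricted fundamental weights `λ̂_i` (as elements `λ̂_i^♯` of `𝔞`) -/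
  fw : Fin r → a
  hfw : ∀ i j, ⟪fw i, b j⟫ = if i = j then ⟪b j, b j⟫ / 2 else 0

/-- Let `𝔤` be a real semisimple Lie algebra with parabolic
subalgebra `𝔭` determined by `Î ⊆ Δ̂⁰`, with grading element `E`.  Suppose
`τ ∈ 𝔞*` is a restricted weight (an integer combination of the restricted
fundamental weights) such that `τ(E) > 0` and `τ` has some negative
coefficient when expressed in the basis of simple restricted roots.  Then
there exists `c₀ ∈ ker τ` such that `ν(c₀) > 0` for all `ν ∈ Δ̂⁺(𝔭⁺)`.

As always, `τ` is recorded via its Killing dual `τ^♯ ∈ 𝔞`, so that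
`τ(x) = ⟪τ, x⟫`. -/
theorem stmt_13 {a : Type} [NormedAddCommGroup a] [InnerProductSpace ℝ a]
    [FiniteDimensional ℝ a] {r : ℕ} (P : GradedParabolicDatum a r)
    (τ : a)
    (hweight : ∃ n : Fin r → ℤ, τ = ∑ i, (n i : ℝ) • P.fw i)
    (hposE : 0 < ⟪τ, P.E⟫)
    (hneg : ∃ k, P.b.repr τ k < 0) :
    ∃ c₀ : a, ⟪τ, c₀⟫ = 0 ∧ ∀ ν ∈ P.posP, 0 < ⟪ν, c₀⟫ := by
  classical
  obtain ⟨k, hk⟩ := hneg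
  have hbpos : (0:ℝ) < ⟪P.b k, P.b k⟫ := lt_of_le_of_ne real_inner_self_nonneg (Ne.symm (inner_self_ne_zero.mpr (P.b.ne_zero k)))
  -- evaluation against E gives the height
  have hEeval : ∀ v : a, ⟪v, P.E⟫ = P.height v := by
    intro v
    conv_lhs => rw [← P.b.sum_repr v]
    rw [sum_inner]
    simp only [real_inner_smul_left, P.hE, mul_ite, mul_one, mul_zero]
    rw [ParabolicDatum.height]
    rw [Finset.sum_ite_mem, Finset.univ_inter]
  -- evaluation against fw k
  have hfweval : ∀ v : a, ⟪v, P.fw k⟫ = P.b.repr v k * (⟪P.b k, P.b k⟫ / 2) := by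
    intro v
    conv_lhs => rw [← P.b.sum_repr v]
    rw [sum_inner]
    have : ∀ j, ⟪P.b j, P.fw k⟫ = if k = j then ⟪P.b j, P.b j⟫ / 2 else 0 := by
      intro j; rw [real_inner_comm, P.hfw]
    simp only [real_inner_smul_left, this, mul_ite, mul_zero]
    rw [Finset.sum_ite_eq (Finset.univ) k (fun j => P.b.repr v j * (⟪P.b j, P.b j⟫ / 2))]
    simp
  have hτfw : ⟪τ, P.fw k⟫ < 0 := by
    rw [hfweval]
    exact mul_neg_of_neg_of_pos hk (half_pos hbpos)
  set s : ℝ := -⟪τ, P.E⟫ / ⟪τ, P.fw k⟫ with hs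
  have hspos : 0 < s := div_pos_of_neg_of_neg (neg_neg_of_pos hposE) hτfw
  refine ⟨P.E + s • P.fw k, ?_, ?_⟩
  · rw [inner_add_right, real_inner_smul_right, hs,
      div_mul_cancel₀ _ (ne_of_lt hτfw)]
    ring
  · intro ν hν
    obtain ⟨hνroot, hνht⟩ := hν
    have hνnn : ∀ i, 0 ≤ P.b.repr ν i := by
      rcases P.coeff_sign ν hνroot with h | h
      · exact h
      · exfalso
        have : P.height ν ≤ 0 := Finset.sum_nonpos fun i _ => h i
        linarith
    rw [inner_add_right, real_inner_smul_right, hEeval, hfweval]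
    have h2 : 0 ≤ s * (P.b.repr ν k * (⟪P.b k, P.b k⟫ / 2)) :=
      mul_nonneg hspos.le (mul_nonneg (hνnn k) (half_pos hbpos).le)
    linarith
end

section
/- Let 𝔰 be a split real form of a complex semisimple Lie algebra with parabolic subalgebra inducing 𝔰_-, 𝔰₀, and let Ω ∈ H²_ℝ(𝔰_-,𝔰) with Ω' ∈ H²_ℂ(𝔰_-^ℂ,𝔰^ℂ) its image under the complexification injection (the ℂ-bilinear extension of Ω). Then: (a) if Ω has the Kruglikov–The property, so does Ω'; and (b) if im(Ω) ⊆ 𝔟_-, then im(Ω') ⊆ 𝔟'_-, where 𝔟_- is the sum of the negative restricted root spaces of 𝔰 and 𝔟'_- is the sum of the negative root spaces of 𝔰^ℂ. -/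
open scoped RealInnerProductSpace

/-- The data of a graded real Lie algebra coming from a parabolic
subalgebra: the negative part `𝔤₋`, the Levi factor `𝔤₀`, the nilpotent
subalgebra `𝔟₋` generated by the negative (restricted) root spaces, and the
projection `𝔤 → 𝔤₋` along `𝔭`. -/
structure CochainContext (g : Type) [LieRing g] [LieAlgebra ℝ g] : Type where
  /-- `𝔤₋` -/
  gminus : Submodule ℝ g
  /-- the Levi factor `𝔤₀` -/
  g0 : Submodule ℝ g
  /-- `𝔟₋`: the sum of the negative (restricted) root spaces -/
  bminus : Submodule ℝ g
  /-- the projection onto `𝔤₋` along `𝔭` -/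
  proj : g →ₗ[ℝ] g
  proj_mem : ∀ x, proj x ∈ gminus
  proj_id : ∀ x ∈ gminus, proj x = x

namespace CochainContext

variable {g : Type} [LieRing g] [LieAlgebra ℝ g] (T : CochainContext g)

/-- the 2-cochains `C²(𝔤₋,𝔤) = Λ²(𝔤₋)* ⊗ 𝔤` -/
abbrev C2 := AlternatingMap ℝ (↥T.gminus) g (Fin 2)

/-- the projection, valued in the subtype -/
def pm (x : g) : ↥T.gminus := ⟨T.proj x, T.proj_mem x⟩

/-- the natural action of `x ∈ 𝔤₀` on a cochain, evaluated at `(u,v)` -/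
def actF (x : g) (Ω : T.C2) (u v : ↥T.gminus) : g :=
  ⁅x, Ω ![u, v]⁆ - Ω ![T.pm ⁅x, (u : g)⁆, v] - Ω ![u, T.pm ⁅x, (v : g)⁆]

/-- The **Kruglikov–The property**: with `𝔨_Ω` the (infinitesimal)
stabiliser of `Ω` in the Levi factor,
(1) `im(Ω) ⊆ 𝔤₋ ⊕ 𝔨_Ω`, and (2) `im(Ω ∧ 1) ⊆ ker Ω`. -/
def KT (Ω : T.C2) : Prop :=
  (∀ u v : ↥T.gminus, ∃ y ∈ T.gminus, ∃ z,
      (z ∈ T.g0 ∧ ∀ u' v' : ↥T.gminus, T.actF z Ω u' v' = 0) ∧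
      Ω ![u, v] = y + z) ∧
  (∀ u v w : ↥T.gminus, Ω ![T.pm (Ω ![u, v]), w] = 0)

end CochainContext

/-- The complex (ℂ-linear) analogue of `CochainContext`, for a complex Lie
algebra. -/
structure CochainContextC (g : Type) [LieRing g] [LieAlgebra ℂ g] : Type where
  /-- `𝔤₋` -/
  gminus : Submodule ℂ g
  /-- the Levi factor `𝔤₀` -/
  g0 : Submodule ℂ g
  /-- `𝔟₋`: the sum of the negative root spaces -/
  bminus : Submodule ℂ g
  /-- the projection onto `𝔤₋` along `𝔭` -/
  proj : g →ₗ[ℂ] g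
  proj_mem : ∀ x, proj x ∈ gminus
  proj_id : ∀ x ∈ gminus, proj x = x

namespace CochainContextC

variable {g : Type} [LieRing g] [LieAlgebra ℂ g] (T : CochainContextC g)

/-- the complex 2-cochains `C²_ℂ(𝔤₋,𝔤) = Λ²(𝔤₋)* ⊗ 𝔤` -/
abbrev C2 := AlternatingMap ℂ (↥T.gminus) g (Fin 2)

/-- the projection, valued in the subtype -/
def pm (x : g) : ↥T.gminus := ⟨T.proj x, T.proj_mem x⟩

/-- the natural action of `x ∈ 𝔤₀` on a cochain, evaluated at `(u,v)` -/
def actF (x : g) (Ω : T.C2) (u v : ↥T.gminus) : g :=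
  ⁅x, Ω ![u, v]⁆ - Ω ![T.pm ⁅x, (u : g)⁆, v] - Ω ![u, T.pm ⁅x, (v : g)⁆]

/-- the Kruglikov–The property (complex case) -/
def KT (Ω : T.C2) : Prop :=
  (∀ u v : ↥T.gminus, ∃ y ∈ T.gminus, ∃ z,
      (z ∈ T.g0 ∧ ∀ u' v' : ↥T.gminus, T.actF z Ω u' v' = 0) ∧
      Ω ![u, v] = y + z) ∧
  (∀ u v w : ↥T.gminus, Ω ![T.pm (Ω ![u, v]), w] = 0)

end CochainContextC


section Alt2
variable {R M N : Type*} [CommRing R] [AddCommGroup M] [Module R M]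
    [AddCommGroup N] [Module R N] (A : AlternatingMap R M N (Fin 2))

private lemma upd0 (u v w : M) : Function.update ![u, v] 0 w = ![w, v] := by
  ext i; fin_cases i <;> simp

private lemma upd1 (u v w : M) : Function.update ![u, v] 1 w = ![u, w] := by
  ext i; fin_cases i <;> simp

lemma alt2_addL (u u' v : M) : A ![u + u', v] = A ![u, v] + A ![u', v] := by
  have := A.map_update_add ![u, v] 0 u u'
  rwa [upd0, upd0, upd0] at this

lemma alt2_addR (u v v' : M) : A ![u, v + v'] = A ![u, v] + A ![u, v'] := by
  have := A.map_update_add ![u, v] 1 v v'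
  rwa [upd1, upd1, upd1] at this

lemma alt2_smulL (c : R) (u v : M) : A ![c • u, v] = c • A ![u, v] := by
  have := A.map_update_smul ![u, v] 0 c u
  rwa [upd0, upd0] at this

lemma alt2_smulR (c : R) (u v : M) : A ![u, c • v] = c • A ![u, v] := by
  have := A.map_update_smul ![u, v] 1 c v
  rwa [upd1, upd1] at this

lemma alt2_subL (u u' v : M) : A ![u - u', v] = A ![u, v] - A ![u', v] := by
  have h : A ![(-1 : R) • u', v] = (-1 : R) • A ![u', v] := alt2_smulL A _ _ _
  rw [sub_eq_add_neg, ← neg_one_smul R u', alt2_addL, h, neg_one_smul, ← sub_eq_add_neg]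

end Alt2

/-- expansion of an alternating 2-form over ℂ at `(u₁ + I u₂, v₁ + I v₂)` -/
lemma alt2_expand {M N : Type*} [AddCommGroup M] [Module ℂ M]
    [AddCommGroup N] [Module ℂ N] (A : AlternatingMap ℂ M N (Fin 2))
    (ua ub va vb : M) :
    A ![ua + (Complex.I : ℂ) • ub, va + (Complex.I : ℂ) • vb] =
      (A ![ua, va] - A ![ub, vb]) +
        (Complex.I : ℂ) • (A ![ua, vb] + A ![ub, va]) := by
  rw [alt2_addL, alt2_addR, alt2_addR, alt2_smulL, alt2_smulL, alt2_smulR, alt2_smulR,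
    smul_smul, Complex.I_mul_I, neg_one_smul, smul_add]
  abel

/-- decomposition of elements of a complex span of the image of a real submodule -/
lemma span_decomp {s gC : Type*} [AddCommGroup s] [Module ℝ s]
    [AddCommGroup gC] [Module ℂ gC] [Module ℝ gC] [IsScalarTower ℝ ℂ gC]
    (f : s →ₗ[ℝ] gC) (M : Submodule ℝ s) (z : gC)
    (hz : z ∈ Submodule.span ℂ (f '' (M : Set s))) :
    ∃ a ∈ M, ∃ b ∈ M, z = f a + (Complex.I : ℂ) • f b := by
  have key : ∀ (x y : ℝ) (w : gC), ((x : ℂ) + (y : ℂ) * Complex.I) • w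
      = x • w + (Complex.I : ℂ) • (y • w) := by
    intro x y w
    rw [add_smul, mul_smul]
    congr 1
    · exact algebraMap_smul ℂ x w
    · rw [smul_comm]
      congr 1
      exact algebraMap_smul ℂ y w
  induction hz using Submodule.span_induction with
  | mem x hx =>
      obtain ⟨a, ha, rfl⟩ := hx
      exact ⟨a, ha, 0, M.zero_mem, by simp⟩
  | zero => exact ⟨0, M.zero_mem, 0, M.zero_mem, by simp⟩
  | add x y _ _ hx hy =>
      obtain ⟨a, ha, b, hb, rfl⟩ := hx
      obtain ⟨c, hc, d, hd, rfl⟩ := hy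
      refine ⟨a + c, M.add_mem ha hc, b + d, M.add_mem hb hd, ?_⟩
      rw [map_add, map_add, smul_add]; abel
  | smul c x _ hx =>
      obtain ⟨a, ha, b, hb, rfl⟩ := hx
      refine ⟨c.re • a - c.im • b, M.sub_mem (M.smul_mem _ ha) (M.smul_mem _ hb),
        c.im • a + c.re • b, M.add_mem (M.smul_mem _ ha) (M.smul_mem _ hb), ?_⟩
      rw [map_sub, map_add, map_smul, map_smul, map_smul, map_smul]
      have hc : c = (c.re : ℂ) + (c.im : ℂ) * Complex.I := (Complex.re_add_im c).symm
      rw [smul_add, hc, key, smul_smul]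
      have : ((c.re : ℂ) + (c.im : ℂ) * Complex.I) * Complex.I
          = ((-c.im : ℝ) : ℂ) + ((c.re : ℝ) : ℂ) * Complex.I := by
        push_cast; ring_nf; rw [Complex.I_sq]; ring
      rw [this, key]
      simp only [Complex.add_re, Complex.add_im, Complex.ofReal_re, Complex.ofReal_im,
        Complex.mul_re, Complex.mul_im, Complex.I_re, Complex.I_im, neg_smul, smul_add, smul_neg]
      ring_nf
      module


namespace CochainContext
variable {g : Type} [LieRing g] [LieAlgebra ℝ g] (T : CochainContext g)

lemma pm_add' (x y : g) : T.pm (x + y) = T.pm x + T.pm y :=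
  Subtype.ext (map_add T.proj x y)

lemma pm_sub' (x y : g) : T.pm (x - y) = T.pm x - T.pm y :=
  Subtype.ext (map_sub T.proj x y)

lemma actF_sub' (x y : g) (Ω : T.C2) (u v : ↥T.gminus) :
    T.actF (x - y) Ω u v = T.actF x Ω u v - T.actF y Ω u v := by
  simp only [actF, sub_lie, pm_sub', alt2_subL, alt2_addL,
    alt2_addR]
  have h1 : Ω ![T.pm ⁅x, (u : g)⁆ - T.pm ⁅y, (u : g)⁆, v]
      = Ω ![T.pm ⁅x, (u : g)⁆, v] - Ω ![T.pm ⁅y, (u : g)⁆, v] := alt2_subL Ω _ _ _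
  have h2 : Ω ![u, T.pm ⁅x, (v : g)⁆ - T.pm ⁅y, (v : g)⁆]
      = Ω ![u, T.pm ⁅x, (v : g)⁆] - Ω ![u, T.pm ⁅y, (v : g)⁆] := by
    rw [sub_eq_add_neg, alt2_addR]
    have : Ω ![u, -T.pm ⁅y, (v : g)⁆] = -Ω ![u, T.pm ⁅y, (v : g)⁆] := by
      rw [← neg_one_smul ℝ (T.pm ⁅y, (v : g)⁆), alt2_smulR, neg_one_smul]
    rw [this, ← sub_eq_add_neg]
  rw [h2]; abel

lemma actF_add' (x y : g) (Ω : T.C2) (u v : ↥T.gminus) :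
    T.actF (x + y) Ω u v = T.actF x Ω u v + T.actF y Ω u v := by
  simp only [actF, add_lie, pm_add']
  rw [alt2_addL, alt2_addR]; abel

end CochainContext

namespace CochainContextC
variable {g : Type} [LieRing g] [LieAlgebra ℂ g] (T : CochainContextC g)

lemma pm_add' (x y : g) : T.pm (x + y) = T.pm x + T.pm y :=
  Subtype.ext (map_add T.proj x y)

lemma pm_smul' (c : ℂ) (x : g) : T.pm (c • x) = c • T.pm x :=
  Subtype.ext (map_smul T.proj c x)

lemma actF_add' (x y : g) (Ω : T.C2) (u v : ↥T.gminus) :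
    T.actF (x + y) Ω u v = T.actF x Ω u v + T.actF y Ω u v := by
  simp only [actF, add_lie, pm_add']
  rw [alt2_addL, alt2_addR]; abel

lemma actF_smul' (c : ℂ) (x : g) (Ω : T.C2) (u v : ↥T.gminus) :
    T.actF (c • x) Ω u v = c • T.actF x Ω u v := by
  simp only [actF, smul_lie, pm_smul', lie_smul, alt2_smulL, alt2_smulR, smul_sub]

end CochainContextC

/-- Proposition 5.1.  Let `𝔰` be a split real form of a
complex semisimple Lie algebra, with parabolic subalgebra inducing
`𝔰₋, 𝔰₀` and with `𝔟₋` the sum of the negative restricted root spaces.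
Let `𝔰^ℂ` be its complexification (realised by an injective homomorphism
`f : 𝔰 → 𝔰^ℂ` with `𝔰^ℂ = f(𝔰) ⊕ i·f(𝔰)`), whose induced parabolic data
`𝔰₋^ℂ, 𝔰₀^ℂ, 𝔟₋'` are the complex spans of the images of the real ones.
Let `Ω ∈ H²_ℝ(𝔰₋,𝔰)` and let `Ω'` be its image under the complexification
injection `H²_ℝ(𝔰₋,𝔰) ↪ H²_ℂ(𝔰₋^ℂ,𝔰^ℂ)`, i.e. the ℂ-bilinear extension of
`Ω`.  Then:
(a) if `Ω` has the Kruglikov–The property, so does `Ω'`; and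
(b) if `im(Ω) ⊆ 𝔟₋`, then `im(Ω') ⊆ 𝔟₋'`. -/
theorem stmt_17 {s : Type} [LieRing s] [LieAlgebra ℝ s]
    {gC : Type} [LieRing gC] [LieAlgebra ℂ gC] [LieAlgebra ℝ gC]
    [IsScalarTower ℝ ℂ gC]
    -- the real cochain context of the split form 𝔰
    (T : CochainContext s)
    -- the complex cochain context of 𝔰^ℂ
    (TC : CochainContextC gC)
    -- the complexification map f : 𝔰 → 𝔰^ℂ
    (f : s →ₗ⁅ℝ⁆ gC)
    (hf_inj : Function.Injective f)
    (hspan : ∀ z : gC, ∃ x y : s, z = f x + (Complex.I : ℂ) • f y)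
    (hind : ∀ x y : s, f x + (Complex.I : ℂ) • f y = 0 → x = 0 ∧ y = 0)
    -- the complex grading data is the complexification of the real one
    (hgm : TC.gminus = Submodule.span ℂ (f '' (T.gminus : Set s)))
    (hg0 : TC.g0 = Submodule.span ℂ (f '' (T.g0 : Set s)))
    (hbm : TC.bminus = Submodule.span ℂ (f '' (T.bminus : Set s)))
    (hproj : ∀ x : s, TC.proj (f x) = f (T.proj x))
    -- harmonic 2-cochains on either side: ker Δ ≅ H²
    (harmR : Submodule ℝ T.C2) (harmC : Submodule ℂ TC.C2)
    -- the ℂ-bilinear extension map Ω ↦ Ω'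
    (ext : T.C2 → TC.C2)
    (hext : ∀ (Ω : T.C2) (u v : ↥T.gminus)
        (hu : f ↑u ∈ TC.gminus) (hv : f ↑v ∈ TC.gminus),
      ext Ω ![⟨f ↑u, hu⟩, ⟨f ↑v, hv⟩] = f (Ω ![u, v]))
    -- the extension maps harmonic elements to harmonic elements
    -- (the injection H²_ℝ(𝔰₋,𝔰) ↪ H²_ℂ(𝔰₋^ℂ,𝔰^ℂ))
    (hext_harm : ∀ Ω ∈ harmR, ext Ω ∈ harmC)
    (Ω : T.C2) (hΩ : Ω ∈ harmR) :
    (T.KT Ω → TC.KT (ext Ω)) ∧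
    ((∀ u v : ↥T.gminus, Ω ![u, v] ∈ T.bminus) →
      ∀ u v : ↥TC.gminus, ext Ω ![u, v] ∈ TC.bminus) := by
  classical
  -- basic membership and decomposition facts
  have memgm : ∀ a : ↥T.gminus, f ↑a ∈ TC.gminus := by
    intro a; rw [hgm]; exact Submodule.subset_span ⟨↑a, a.2, rfl⟩
  have hdecomp : ∀ u : ↥TC.gminus, ∃ a b : ↥T.gminus,
      (u : gC) = f ↑a + (Complex.I : ℂ) • f ↑b := by
    intro u
    have hu : (u : gC) ∈ Submodule.span ℂ (⇑f.toLinearMap '' (T.gminus : Set s)) := by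
      exact le_of_eq hgm u.2
    obtain ⟨a, ha, b, hb, h⟩ := span_decomp f.toLinearMap T.gminus _ hu
    exact ⟨⟨a, ha⟩, ⟨b, hb⟩, h⟩
  -- the main expansion formula
  have hmain : ∀ (u v : ↥TC.gminus) (a b c d : ↥T.gminus),
      (u : gC) = f ↑a + (Complex.I : ℂ) • f ↑b →
      (v : gC) = f ↑c + (Complex.I : ℂ) • f ↑d →
      ext Ω ![u, v] = f (Ω ![a, c] - Ω ![b, d]) +
        (Complex.I : ℂ) • f (Ω ![a, d] + Ω ![b, c]) := by
    intro u v a b c d hu hv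
    have hu' : u = (⟨f ↑a, memgm a⟩ : ↥TC.gminus) +
        (Complex.I : ℂ) • (⟨f ↑b, memgm b⟩ : ↥TC.gminus) := by
      apply Subtype.ext; rw [hu]; rfl
    have hv' : v = (⟨f ↑c, memgm c⟩ : ↥TC.gminus) +
        (Complex.I : ℂ) • (⟨f ↑d, memgm d⟩ : ↥TC.gminus) := by
      apply Subtype.ext; rw [hv]; rfl
    rw [hu', hv', alt2_expand, hext Ω a c (memgm a) (memgm c),
      hext Ω b d (memgm b) (memgm d), hext Ω a d (memgm a) (memgm d),
      hext Ω b c (memgm b) (memgm c), map_sub f, map_add f]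
  constructor
  · -- (a) the Kruglikov--The property transfers
    rintro ⟨h1, h2⟩
    -- transfer of the stabiliser condition
    have hstab : ∀ z0 : s, (∀ u' v' : ↥T.gminus, T.actF z0 Ω u' v' = 0) →
        ∀ u' v' : ↥TC.gminus, TC.actF (f z0) (ext Ω) u' v' = 0 := by
      intro z0 hz0 u' v'
      obtain ⟨a, b, hu⟩ := hdecomp u'
      obtain ⟨c, d, hv⟩ := hdecomp v'
      have t1 : ⁅f z0, ext Ω ![u', v']⁆ =
          f ⁅z0, Ω ![a, c] - Ω ![b, d]⁆ +
            (Complex.I : ℂ) • f ⁅z0, Ω ![a, d] + Ω ![b, c]⁆ := by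
        rw [hmain u' v' a b c d hu hv, lie_add, lie_smul, ← f.map_lie, ← f.map_lie]
      have hpm2 : ((TC.pm ⁅f z0, (u' : gC)⁆ : ↥TC.gminus) : gC) =
          f ↑(T.pm ⁅z0, (a : s)⁆) + (Complex.I : ℂ) • f ↑(T.pm ⁅z0, (b : s)⁆) := by
        show TC.proj _ = _
        rw [hu, lie_add, lie_smul, ← f.map_lie, ← f.map_lie, map_add, map_smul,
          hproj, hproj]
        rfl
      have hpm3 : ((TC.pm ⁅f z0, (v' : gC)⁆ : ↥TC.gminus) : gC) =
          f ↑(T.pm ⁅z0, (c : s)⁆) + (Complex.I : ℂ) • f ↑(T.pm ⁅z0, (d : s)⁆) := by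
        show TC.proj _ = _
        rw [hv, lie_add, lie_smul, ← f.map_lie, ← f.map_lie, map_add, map_smul,
          hproj, hproj]
        rfl
      have t2 := hmain (TC.pm ⁅f z0, (u' : gC)⁆) v'
        (T.pm ⁅z0, (a : s)⁆) (T.pm ⁅z0, (b : s)⁆) c d hpm2 hv
      have t3 := hmain u' (TC.pm ⁅f z0, (v' : gC)⁆) a b
        (T.pm ⁅z0, (c : s)⁆) (T.pm ⁅z0, (d : s)⁆) hu hpm3
      have hac := hz0 a c
      have hbd := hz0 b d
      have had := hz0 a d
      have hbc := hz0 b c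
      unfold CochainContext.actF at hac hbd had hbc
      have e1 : ⁅z0, Ω ![a, c] - Ω ![b, d]⁆ -
          (Ω ![T.pm ⁅z0, (a : s)⁆, c] - Ω ![T.pm ⁅z0, (b : s)⁆, d]) -
          (Ω ![a, T.pm ⁅z0, (c : s)⁆] - Ω ![b, T.pm ⁅z0, (d : s)⁆]) = 0 := by
        rw [lie_sub]
        calc ⁅z0, Ω ![a, c]⁆ - ⁅z0, Ω ![b, d]⁆ -
              (Ω ![T.pm ⁅z0, (a : s)⁆, c] - Ω ![T.pm ⁅z0, (b : s)⁆, d]) -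
              (Ω ![a, T.pm ⁅z0, (c : s)⁆] - Ω ![b, T.pm ⁅z0, (d : s)⁆])
            = (⁅z0, Ω ![a, c]⁆ - Ω ![T.pm ⁅z0, (a : s)⁆, c] -
                Ω ![a, T.pm ⁅z0, (c : s)⁆]) -
              (⁅z0, Ω ![b, d]⁆ - Ω ![T.pm ⁅z0, (b : s)⁆, d] -
                Ω ![b, T.pm ⁅z0, (d : s)⁆]) := by abel
          _ = 0 := by rw [hac, hbd]; simp
      have e2 : ⁅z0, Ω ![a, d] + Ω ![b, c]⁆ -
          (Ω ![T.pm ⁅z0, (a : s)⁆, d] + Ω ![T.pm ⁅z0, (b : s)⁆, c]) -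
          (Ω ![a, T.pm ⁅z0, (d : s)⁆] + Ω ![b, T.pm ⁅z0, (c : s)⁆]) = 0 := by
        rw [lie_add]
        calc ⁅z0, Ω ![a, d]⁆ + ⁅z0, Ω ![b, c]⁆ -
              (Ω ![T.pm ⁅z0, (a : s)⁆, d] + Ω ![T.pm ⁅z0, (b : s)⁆, c]) -
              (Ω ![a, T.pm ⁅z0, (d : s)⁆] + Ω ![b, T.pm ⁅z0, (c : s)⁆])
            = (⁅z0, Ω ![a, d]⁆ - Ω ![T.pm ⁅z0, (a : s)⁆, d] -
                Ω ![a, T.pm ⁅z0, (d : s)⁆]) +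
              (⁅z0, Ω ![b, c]⁆ - Ω ![T.pm ⁅z0, (b : s)⁆, c] -
                Ω ![b, T.pm ⁅z0, (c : s)⁆]) := by abel
          _ = 0 := by rw [had, hbc]; simp
      show ⁅f z0, ext Ω ![u', v']⁆ - ext Ω ![TC.pm ⁅f z0, (u' : gC)⁆, v'] -
          ext Ω ![u', TC.pm ⁅f z0, (v' : gC)⁆] = 0
      rw [t1, t2, t3]
      calc f ⁅z0, Ω ![a, c] - Ω ![b, d]⁆ +
            (Complex.I : ℂ) • f ⁅z0, Ω ![a, d] + Ω ![b, c]⁆ -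
            (f (Ω ![T.pm ⁅z0, (a : s)⁆, c] - Ω ![T.pm ⁅z0, (b : s)⁆, d]) +
              (Complex.I : ℂ) • f (Ω ![T.pm ⁅z0, (a : s)⁆, d] +
                Ω ![T.pm ⁅z0, (b : s)⁆, c])) -
            (f (Ω ![a, T.pm ⁅z0, (c : s)⁆] - Ω ![b, T.pm ⁅z0, (d : s)⁆]) +
              (Complex.I : ℂ) • f (Ω ![a, T.pm ⁅z0, (d : s)⁆] +
                Ω ![b, T.pm ⁅z0, (c : s)⁆]))
          = f (⁅z0, Ω ![a, c] - Ω ![b, d]⁆ -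
              (Ω ![T.pm ⁅z0, (a : s)⁆, c] - Ω ![T.pm ⁅z0, (b : s)⁆, d]) -
              (Ω ![a, T.pm ⁅z0, (c : s)⁆] - Ω ![b, T.pm ⁅z0, (d : s)⁆])) +
            (Complex.I : ℂ) • f (⁅z0, Ω ![a, d] + Ω ![b, c]⁆ -
              (Ω ![T.pm ⁅z0, (a : s)⁆, d] + Ω ![T.pm ⁅z0, (b : s)⁆, c]) -
              (Ω ![a, T.pm ⁅z0, (d : s)⁆] + Ω ![b, T.pm ⁅z0, (c : s)⁆])) := by
            simp only [map_sub, map_add, smul_sub, smul_add]; abel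
        _ = 0 := by rw [e1, e2]; simp
    constructor
    · -- condition (1)
      intro u v
      obtain ⟨a, b, hu⟩ := hdecomp u
      obtain ⟨c, d, hv⟩ := hdecomp v
      obtain ⟨y1, hy1, z1, ⟨hz1g, hz1s⟩, he1⟩ := h1 a c
      obtain ⟨y2, hy2, z2, ⟨hz2g, hz2s⟩, he2⟩ := h1 b d
      obtain ⟨y3, hy3, z3, ⟨hz3g, hz3s⟩, he3⟩ := h1 a d
      obtain ⟨y4, hy4, z4, ⟨hz4g, hz4s⟩, he4⟩ := h1 b c
      refine ⟨f (y1 - y2) + (Complex.I : ℂ) • f (y3 + y4), ?_,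
        f (z1 - z2) + (Complex.I : ℂ) • f (z3 + z4), ⟨?_, ?_⟩, ?_⟩
      · rw [hgm]
        exact Submodule.add_mem _
          (Submodule.subset_span ⟨_, T.gminus.sub_mem hy1 hy2, rfl⟩)
          (Submodule.smul_mem _ _
            (Submodule.subset_span ⟨_, T.gminus.add_mem hy3 hy4, rfl⟩))
      · rw [hg0]
        exact Submodule.add_mem _
          (Submodule.subset_span ⟨_, T.g0.sub_mem hz1g hz2g, rfl⟩)
          (Submodule.smul_mem _ _
            (Submodule.subset_span ⟨_, T.g0.add_mem hz3g hz4g, rfl⟩))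
      · -- the stabiliser condition for z
        intro u' v'
        have hs1 : ∀ u'' v'' : ↥T.gminus, T.actF (z1 - z2) Ω u'' v'' = 0 := by
          intro u'' v''
          rw [CochainContext.actF_sub', hz1s, hz2s, sub_zero]
        have hs2 : ∀ u'' v'' : ↥T.gminus, T.actF (z3 + z4) Ω u'' v'' = 0 := by
          intro u'' v''
          rw [CochainContext.actF_add', hz3s, hz4s, add_zero]
        rw [CochainContextC.actF_add', CochainContextC.actF_smul',
          hstab _ hs1 u' v', hstab _ hs2 u' v', smul_zero, add_zero]
      · -- the decomposition equation
        rw [hmain u v a b c d hu hv, he1, he2, he3, he4]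
        simp only [map_sub, map_add, smul_sub, smul_add]
        abel
    · -- condition (2)
      intro u v w
      obtain ⟨a, b, hu⟩ := hdecomp u
      obtain ⟨c, d, hv⟩ := hdecomp v
      obtain ⟨e, k, hw⟩ := hdecomp w
      have hX := hmain u v a b c d hu hv
      have hpm : ((TC.pm (ext Ω ![u, v]) : ↥TC.gminus) : gC) =
          f ↑(T.pm (Ω ![a, c] - Ω ![b, d])) +
            (Complex.I : ℂ) • f ↑(T.pm (Ω ![a, d] + Ω ![b, c])) := by
        show TC.proj _ = _
        rw [hX, map_add, map_smul, hproj, hproj]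
        rfl
      rw [hmain (TC.pm (ext Ω ![u, v])) w (T.pm (Ω ![a, c] - Ω ![b, d]))
        (T.pm (Ω ![a, d] + Ω ![b, c])) e k hpm hw]
      have hP1 : Ω ![T.pm (Ω ![a, c] - Ω ![b, d]), e] = 0 := by
        rw [CochainContext.pm_sub', alt2_subL, h2 a c e, h2 b d e, sub_zero]
      have hP2 : Ω ![T.pm (Ω ![a, c] - Ω ![b, d]), k] = 0 := by
        rw [CochainContext.pm_sub', alt2_subL, h2 a c k, h2 b d k, sub_zero]
      have hQ1 : Ω ![T.pm (Ω ![a, d] + Ω ![b, c]), e] = 0 := by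
        rw [CochainContext.pm_add', alt2_addL, h2 a d e, h2 b c e, add_zero]
      have hQ2 : Ω ![T.pm (Ω ![a, d] + Ω ![b, c]), k] = 0 := by
        rw [CochainContext.pm_add', alt2_addL, h2 a d k, h2 b c k, add_zero]
      rw [hP1, hP2, hQ1, hQ2]
      simp
  · -- (b) image in 𝔟₋ transfers
    intro hb u v
    obtain ⟨a, b, hu⟩ := hdecomp u
    obtain ⟨c, d, hv⟩ := hdecomp v
    rw [hmain u v a b c d hu hv, hbm]
    exact Submodule.add_mem _
      (Submodule.subset_span ⟨_, T.bminus.sub_mem (hb a c) (hb b d), rfl⟩)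
      (Submodule.smul_mem _ _
        (Submodule.subset_span ⟨_, T.bminus.add_mem (hb a d) (hb b c), rfl⟩))
end
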